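/- arXiv:0904.1013 — 4 statements merged into one kernel-verified Lean document; each statement's English description precedes it below -/
import Mathlib

section
/- For a covering map p : E → B with E path-connected, cat(E) ≤ cat(B). -/
open scoped ENat
open Set

noncomputable section

/-- A continuous map is nullhomotopic on a subset `U` of its domain if its restriction
to `U` is homotopic to a constant map. -/
def NullhomotopicOn {X Y : Type*} [TopologicalSpace X] [TopologicalSpace Y]
    (f : C(X, Y)) (U : Set X) : Prop :=
  ∃ y : Y, (f.restrict U).Homotopic (ContinuousMap.const U y)

/-- `catLE f m` : the domain of `f` admits a cover by `m + 1` open sets on each of which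
`f` is nullhomotopic. -/
def catLE {X Y : Type*} [TopologicalSpace X] [TopologicalSpace Y] (f : C(X, Y)) (m : ℕ) : Prop :=
  ∃ U : Fin (m + 1) → Set X, (∀ i, IsOpen (U i)) ∧ (⋃ i, U i) = Set.univ ∧
    ∀ i, NullhomotopicOn f (U i)

/-- The Lusternik–Schnirelmann category of a map: the least `m` such that the domain is
covered by `m + 1` open sets on each of which the map is nullhomotopic (`⊤` if none). -/
def mapCat {X Y : Type*} [TopologicalSpace X] [TopologicalSpace Y] (f : C(X, Y)) : ℕ∞ :=
  sInf {n : ℕ∞ | ∃ m : ℕ, n = m ∧ catLE f m}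

/-- The (normalized) Lusternik–Schnirelmann category of a space: `cat X = cat (id X)`,
the least `m` such that `X` is covered by `m + 1` open sets each contractible in `X`. -/
def LSCat (X : Type*) [TopologicalSpace X] : ℕ∞ :=
  mapCat (ContinuousMap.id X)

/-- The subspace category `cat_X A`: the least `m` such that `A` is covered by `m + 1`
subsets of `X`, each open in `X` and contractible within `X`. -/
def subCat {X : Type*} [TopologicalSpace X] (A : Set X) : ℕ∞ :=
  sInf {n : ℕ∞ | ∃ m : ℕ, n = m ∧ ∃ U : Fin (m + 1) → Set X,
    (∀ i, IsOpen (U i)) ∧ A ⊆ (⋃ i, U i) ∧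
    ∀ i, NullhomotopicOn (ContinuousMap.id X) (U i)}

/-- The sectional category (Schwarz genus, normalized) of a map `p : E → B`: the least `m`
such that `B` admits a cover by `m + 1` open sets over each of which `p` has a continuous
local section. -/
def secat {E B : Type*} [TopologicalSpace E] [TopologicalSpace B] (p : C(E, B)) : ℕ∞ :=
  sInf {n : ℕ∞ | ∃ m : ℕ, n = m ∧ ∃ U : Fin (m + 1) → Set B,
    (∀ i, IsOpen (U i)) ∧ (⋃ i, U i) = Set.univ ∧
    ∀ i, ∃ s : C(U i, E), ∀ x : U i, p (s x) = (x : B)}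

section Aux
open unitInterval

variable {E B A : Type*} [TopologicalSpace E] [TopologicalSpace B] [TopologicalSpace A]
  {p : E → B}

/-- Local homotopy lifting: around each point of `A` there is a neighborhood on which the
homotopy `f` lifts, with prescribed initial lift. -/
theorem IsCoveringMap.exists_local_lift (hp : IsCoveringMap p)
    (f : A × I → B) (hf : Continuous f) (g₀ : A → E) (h₀ : ∀ a, p (g₀ a) = f (a, 0))
    (hg₀ : Continuous g₀) (a : A) :
    ∃ N : Set A, IsOpen N ∧ a ∈ N ∧ ∃ G : A × I → E,
      ContinuousOn G (N ×ˢ (univ : Set I)) ∧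
      (∀ x ∈ N ×ˢ (univ : Set I), p (G x) = f x) ∧ ∀ x ∈ N, G (x, 0) = g₀ x := by
  refine ⟨univ, isOpen_univ, mem_univ a, fun x => hp.liftHomotopy
    ⟨fun y => f (y.2, y.1), hf.comp continuous_swap⟩ ⟨g₀, hg₀⟩ (fun a => (h₀ a).symm) (x.2, x.1),
    ?_, ?_, ?_⟩
  · exact ((ContinuousMap.continuous _).comp continuous_swap).continuousOn
  · intro x _; exact congr_fun (hp.liftHomotopy_lifts _ _ _) (x.2, x.1)
  · intro x _; exact hp.liftHomotopy_zero _ _ _ x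

/-- Homotopy lifting property for covering maps. -/
theorem IsCoveringMap.exists_lift (hp : IsCoveringMap p)
    (f : A × I → B) (hf : Continuous f) (g₀ : A → E) (h₀ : ∀ a, p (g₀ a) = f (a, 0))
    (hg₀ : Continuous g₀) :
    ∃ G : A × I → E, Continuous G ∧ (∀ x, p (G x) = f x) ∧ ∀ a, G (a, 0) = g₀ a := by
  choose N hNo haN G hGc hGp hG0 using hp.exists_local_lift f hf g₀ h₀ hg₀
  -- uniqueness of lifts on slices
  have glue : ∀ a a' : A, ∀ x : A, x ∈ N a → x ∈ N a' → ∀ s : I,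
      G a (x, s) = G a' (x, s) := by
    intro a a' x hx hx' s
    have key : (fun s : I => G a (x, s)) = fun s : I => G a' (x, s) := by
      refine hp.eq_of_comp_eq ?_ ?_ ?_ 0 ?_
      · exact (hGc a).comp_continuous (continuous_const.prodMk continuous_id)
          fun s => ⟨hx, mem_univ s⟩
      · exact (hGc a').comp_continuous (continuous_const.prodMk continuous_id)
          fun s => ⟨hx', mem_univ s⟩
      · funext s
        simp only [Function.comp_apply]
        rw [hGp a (x, s) ⟨hx, mem_univ s⟩, hGp a' (x, s) ⟨hx', mem_univ s⟩]
      · rw [hG0 a x hx, hG0 a' x hx']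
    exact congrFun key s
  refine ⟨fun x => G x.1 x, ?_, fun x => hGp x.1 x ⟨haN x.1, mem_univ _⟩,
    fun a => hG0 a a (haN a)⟩
  rw [continuous_iff_continuousAt]
  intro x
  have honbhd : (N x.1) ×ˢ (univ : Set I) ∈ nhds x :=
    ((hNo x.1).prod isOpen_univ).mem_nhds ⟨haN x.1, mem_univ _⟩
  have : ContinuousAt (G x.1) x := (hGc x.1).continuousAt honbhd
  refine this.congr ?_
  refine Filter.eventuallyEq_of_mem honbhd ?_
  rintro ⟨y, s⟩ hy
  exact glue x.1 y y hy.1 (haN y) s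


theorem nullhomotopicOn_preimage (hp : IsCoveringMap p) [PathConnectedSpace E]
    {U : Set B} (hU : NullhomotopicOn (ContinuousMap.id B) U) :
    NullhomotopicOn (ContinuousMap.id E) (p ⁻¹' U) := by
  obtain ⟨b, ⟨H⟩⟩ := hU
  set V : Set E := p ⁻¹' U with hV
  set f : ↥V × I → B := fun x => H (x.2, ⟨p x.1.1, x.1.2⟩) with hfdef
  have hf : Continuous f :=
    H.continuous.comp (continuous_snd.prodMk
      (Continuous.subtype_mk (hp.continuous.comp (continuous_subtype_val.comp continuous_fst)) _))
  have h₀ : ∀ v : ↥V, p ((v : E)) = f (v, 0) := by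
    intro v
    simp only [hfdef]
    rw [H.apply_zero]
    rfl
  obtain ⟨G, hGc, hGp, hG0⟩ := hp.exists_lift f hf (fun v => (v : E)) h₀ continuous_subtype_val
  have hfib : ∀ v : ↥V, G (v, 1) ∈ p ⁻¹' {b} := by
    intro v
    rw [mem_preimage, mem_singleton_iff, hGp (v, 1)]
    simp only [hfdef]
    rw [H.apply_one]
    rfl
  haveI : DiscreteTopology ↥(p ⁻¹' {b}) := (hp b).1
  obtain ⟨e₀⟩ : Nonempty E := inferInstance
  have γ : ∀ c : ↥(p ⁻¹' {b}), Path (c : E) e₀ := fun c =>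
    (PathConnectedSpace.joined (c : E) e₀).somePath
  set Ψ : ↥(p ⁻¹' {b}) × I → E := fun x => γ x.1 x.2 with hΨ
  have hΨc : Continuous Ψ := by
    rw [continuous_iff_continuousAt]
    rintro ⟨c, s⟩
    have hopen : ({c} ×ˢ (univ : Set I)) ∈ nhds ((c, s) : ↥(p ⁻¹' {b}) × I) :=
      ((isOpen_discrete {c}).prod isOpen_univ).mem_nhds ⟨rfl, mem_univ _⟩
    have : ContinuousAt (fun x : ↥(p ⁻¹' {b}) × I => γ c x.2) (c, s) :=
      ((γ c).continuous.comp continuous_snd).continuousAt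
    refine this.congr (Filter.eventuallyEq_of_mem hopen ?_)
    rintro ⟨c', s'⟩ hc'
    obtain rfl : c' = c := hc'.1
    rfl
  set q : ↥V → ↥(p ⁻¹' {b}) := fun v => ⟨G (v, 1), hfib v⟩ with hq
  have hqc : Continuous q :=
    Continuous.subtype_mk (hGc.comp (continuous_id.prodMk continuous_const)) _
  set mid : C(↥V, E) := ⟨fun v => G (v, 1), hGc.comp (continuous_id.prodMk continuous_const)⟩
  refine ⟨e₀, ⟨?_⟩⟩
  have Hom1 : ((ContinuousMap.id E).restrict V).Homotopy mid :=
    { toFun := fun x => G (x.2, x.1),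
      continuous_toFun := hGc.comp (continuous_snd.prodMk continuous_fst),
      map_zero_left := fun v => hG0 v,
      map_one_left := fun v => rfl }
  have Hom2 : mid.Homotopy (ContinuousMap.const ↥V e₀) :=
    { toFun := fun x => Ψ (q x.2, x.1),
      continuous_toFun := hΨc.comp ((hqc.comp continuous_snd).prodMk continuous_fst),
      map_zero_left := fun v => (γ (q v)).source,
      map_one_left := fun v => (γ (q v)).target }
  exact Hom1.trans Hom2

end Aux

/-- For a covering map `p : E → B` with `E` path-connected,
`cat E ≤ cat B`. -/
theorem lscat_le_of_coveringMap {E B : Type*} [TopologicalSpace E] [TopologicalSpace B]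
    (p : E → B) (hp : IsCoveringMap p) [PathConnectedSpace E] :
    LSCat E ≤ LSCat B := by
  unfold LSCat mapCat
  apply sInf_le_sInf
  rintro n ⟨m, rfl, U, hUo, hUc, hUn⟩
  refine ⟨m, rfl, fun i => p ⁻¹' (U i), fun i => (hUo i).preimage hp.continuous, ?_,
    fun i => nullhomotopicOn_preimage hp (hUn i)⟩
  rw [← Set.preimage_iUnion, hUc, Set.preimage_univ]
end
end

section
/- Let X be an n-dimensional CW-complex with r-skeleton X^{(r)}, and suppose the complement X − X^{(k−1)} of the (k−1)-skeleton is path-connected. Then cat(X − X^{(k−1)}) ≤ n − k. -/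
open scoped ENat
open Set

noncomputable section

/-- The closed unit disk in `ℝ^m`. -/
abbrev CWDisk (m : ℕ) : Set (EuclideanSpace ℝ (Fin m)) :=
  Metric.closedBall (0 : EuclideanSpace ℝ (Fin m)) 1

/-- A CW-structure on a topological space `X`: cells in each dimension with characteristic
maps from closed disks, such that the open cells partition `X`, each characteristic map is
injective on the open disk, the boundary of each cell lies in the cells of lower dimension,
the closure of each cell meets only finitely many open cells (closure-finiteness), and `X`
carries the weak topology determined by the characteristic maps. -/
structure CWStructure (X : Type*) [TopologicalSpace X] where
  /-- the index type of the cells in each dimension -/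
  cell : ℕ → Type
  /-- the characteristic map of each cell -/
  attach : ∀ m, cell m → C(CWDisk m, X)
  inj : ∀ m i, Set.InjOn (attach m i)
    {y : CWDisk m | ‖(y : EuclideanSpace ℝ (Fin m))‖ < 1}
  disjoint' : ∀ p q : Σ m, cell m, p ≠ q →
    Disjoint (attach p.1 p.2 '' {y | ‖(y : EuclideanSpace ℝ (Fin p.1))‖ < 1})
      (attach q.1 q.2 '' {y | ‖(y : EuclideanSpace ℝ (Fin q.1))‖ < 1})
  cover : (⋃ p : Σ m, cell m,
    attach p.1 p.2 '' {y | ‖(y : EuclideanSpace ℝ (Fin p.1))‖ < 1}) = Set.univ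
  boundary : ∀ m i, attach m i '' {y | ‖(y : EuclideanSpace ℝ (Fin m))‖ = 1} ⊆
    ⋃ (p : Σ m', cell m') (_ : p.1 < m),
      attach p.1 p.2 '' {y | ‖(y : EuclideanSpace ℝ (Fin p.1))‖ < 1}
  closureFinite : ∀ m i, {p : Σ m', cell m' |
    ((attach p.1 p.2 '' {y | ‖(y : EuclideanSpace ℝ (Fin p.1))‖ < 1}) ∩
      Set.range (attach m i)).Nonempty}.Finite
  weakTopology : ∀ A : Set X, (∀ m i, IsClosed ((attach m i) ⁻¹' A)) → IsClosed A

/-- The open cell of index `i` in dimension `m`. -/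
def CWStructure.openCell {X : Type*} [TopologicalSpace X] (C : CWStructure X)
    (m : ℕ) (i : C.cell m) : Set X :=
  C.attach m i '' {y | ‖(y : EuclideanSpace ℝ (Fin m))‖ < 1}

/-- The `r`-skeleton of a CW-structure: the union of the (open) cells of dimension `≤ r`. -/
def CWStructure.skeleton {X : Type*} [TopologicalSpace X] (C : CWStructure X)
    (r : ℕ) : Set X :=
  ⋃ (p : Σ m, C.cell m) (_ : p.1 ≤ r), C.openCell p.1 p.2

/-- A CW-structure has dimension at most `d` if it has no cells above dimension `d`. -/
def CWStructure.DimLE {X : Type*} [TopologicalSpace X] (C : CWStructure X) (d : ℕ) : Prop :=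
  ∀ m, d < m → IsEmpty (C.cell m)
namespace CWProof
open unitInterval
set_option linter.unusedSectionVars false

variable {X : Type*} [TopologicalSpace X] [T2Space X] (C : CWStructure X)

instance (m : ℕ) : CompactSpace ↥(CWDisk m) :=
  isCompact_iff_compactSpace.mp (isCompact_closedBall _ _)

/-- characteristic map of a sigma-cell -/
def amap (p : Σ m, C.cell m) : C(CWDisk p.1, X) := C.attach p.1 p.2

def ball (m : ℕ) : Set ↥(CWDisk m) := {y | ‖(y : EuclideanSpace ℝ (Fin m))‖ < 1}

def oCell (p : Σ m, C.cell m) : Set X := amap C p '' ball p.1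

def cCell (p : Σ m, C.cell m) : Set X := Set.range (amap C p)

lemma oCell_eq (p : Σ m, C.cell m) : oCell C p = C.openCell p.1 p.2 := rfl

lemma oCell_subset_cCell (p : Σ m, C.cell m) : oCell C p ⊆ cCell C p :=
  Set.image_subset_range _ _

lemma isCompact_cCell (p : Σ m, C.cell m) : IsCompact (cCell C p) :=
  isCompact_range (amap C p).continuous

lemma isClosed_cCell (p : Σ m, C.cell m) : IsClosed (cCell C p) :=
  (isCompact_cCell C p).isClosed

/-- union of the open cells of dimension < r -/
def skelLT (r : ℕ) : Set X := ⋃ (p : Σ m, C.cell m) (_ : p.1 < r), oCell C p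

lemma skeleton_eq_skelLT (r : ℕ) : C.skeleton r = skelLT C (r + 1) := by
  simp only [CWStructure.skeleton, skelLT, Nat.lt_succ_iff]
  rfl

lemma skelLT_mono {r s : ℕ} (h : r ≤ s) : skelLT C r ⊆ skelLT C s := by
  apply Set.iUnion_mono
  intro p
  exact Set.iUnion_subset fun hp => Set.subset_iUnion_of_subset (lt_of_lt_of_le hp h) le_rfl

lemma cCell_subset (p : Σ m, C.cell m) : cCell C p ⊆ oCell C p ∪ skelLT C p.1 := by
  rintro x ⟨y, rfl⟩
  rcases lt_or_eq_of_le (mem_closedBall_zero_iff.mp y.2) with hy | hy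
  · exact Or.inl ⟨y, hy, rfl⟩
  · right
    have := C.boundary p.1 p.2 ⟨y, hy, rfl⟩
    simp only [Set.mem_iUnion] at this
    obtain ⟨q, hq, hmem⟩ := this
    exact Set.mem_iUnion₂.mpr ⟨q, hq, hmem⟩

lemma closure_oCell_subset (p : Σ m, C.cell m) : closure (oCell C p) ⊆ cCell C p :=
  closure_minimal (oCell_subset_cCell C p) (isClosed_cCell C p)

lemma oCell_subset_skelLT {p : Σ m, C.cell m} {r : ℕ} (h : p.1 < r) :
    oCell C p ⊆ skelLT C r :=
  Set.subset_iUnion₂_of_subset p h le_rfl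

lemma cCell_subset_skelLT {p : Σ m, C.cell m} {r : ℕ} (h : p.1 < r) :
    cCell C p ⊆ skelLT C r :=
  (cCell_subset C p).trans (Set.union_subset (oCell_subset_skelLT C h)
    (skelLT_mono C h.le))

lemma cCell_subset_skeleton {p : Σ m, C.cell m} {r : ℕ} (h : p.1 ≤ r) :
    cCell C p ⊆ C.skeleton r := by
  rw [skeleton_eq_skelLT]; exact cCell_subset_skelLT C (Nat.lt_succ_of_le h)

/-- weak topology via closed cells -/
lemma isClosed_of_inter_cCell {B : Set X} (h : ∀ p : Σ m, C.cell m, IsClosed (B ∩ cCell C p)) :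
    IsClosed B := by
  apply C.weakTopology
  intro m i
  have : (C.attach m i) ⁻¹' B = (C.attach m i) ⁻¹' (B ∩ cCell C ⟨m, i⟩) := by
    ext y
    simp only [Set.mem_preimage, Set.mem_inter_iff]
    exact ⟨fun hy => ⟨hy, Set.mem_range_self _⟩, fun hy => hy.1⟩
  rw [this]
  exact (h ⟨m, i⟩).preimage (C.attach m i).continuous

lemma inter_cCell_closed {B : Set X} (p : Σ m, C.cell m)
    (h : IsClosed (amap C p ⁻¹' B)) : IsClosed (B ∩ cCell C p) := by
  have : B ∩ cCell C p = amap C p '' (amap C p ⁻¹' B) := by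
    rw [Set.image_preimage_eq_inter_range]; rfl
  rw [this]
  exact ((h.isCompact).image (amap C p).continuous).isClosed

/-- the cells meeting a given closed cell -/
lemma finite_touching (p : Σ m, C.cell m) :
    {q : Σ m, C.cell m | (oCell C q ∩ cCell C p).Nonempty}.Finite :=
  C.closureFinite p.1 p.2

lemma disjoint_oCell {p q : Σ m, C.cell m} (h : p ≠ q) :
    Disjoint (oCell C p) (oCell C q) := C.disjoint' p q h

lemma cell_unique {p q : Σ m, C.cell m} {x : X} (hp : x ∈ oCell C p) (hq : x ∈ oCell C q) :
    p = q := by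
  by_contra hne
  exact (disjoint_oCell C hne).ne_of_mem hp hq rfl

lemma coord_unique {p : Σ m, C.cell m} {y z : ↥(CWDisk p.1)} (hy : y ∈ ball p.1)
    (hz : z ∈ ball p.1) (h : amap C p y = amap C p z) : y = z :=
  C.inj p.1 p.2 hy hz h

lemma isClosed_skelLT (r : ℕ) : IsClosed (skelLT C r) := by
  induction r with
  | zero =>
    have : skelLT C 0 = ∅ := by
      simp [skelLT]
    rw [this]; exact isClosed_empty
  | succ r ih =>
    apply isClosed_of_inter_cCell
    intro p
    by_cases hp : p.1 < r + 1
    · have : skelLT C (r + 1) ∩ cCell C p = cCell C p :=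
        Set.inter_eq_self_of_subset_right (cCell_subset_skelLT C hp)
      rw [this]; exact isClosed_cCell C p
    · set T := {q : Σ m, C.cell m | (oCell C q ∩ cCell C p).Nonempty} with hT
      have hTfin : T.Finite := finite_touching C p
      have key : skelLT C (r + 1) ∩ cCell C p =
          (skelLT C r ∪ ⋃ q ∈ {q ∈ T | q.1 = r}, cCell C q) ∩ cCell C p := by
        ext x
        simp only [Set.mem_inter_iff, Set.mem_union]
        constructor
        · rintro ⟨hx, hxc⟩
          refine ⟨?_, hxc⟩
          obtain ⟨q, hq⟩ := Set.mem_iUnion.mp hx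
          obtain ⟨hqlt, hxq⟩ := Set.mem_iUnion.mp hq
          rcases lt_or_eq_of_le (Nat.lt_succ_iff.mp hqlt) with h' | h'
          · exact Or.inl (oCell_subset_skelLT C h' hxq)
          · refine Or.inr (Set.mem_biUnion ⟨⟨x, hxq, hxc⟩, h'⟩ (oCell_subset_cCell C q hxq))
        · rintro ⟨hx, hxc⟩
          refine ⟨?_, hxc⟩
          rcases hx with hx | hx
          · exact skelLT_mono C (Nat.le_succ r) hx
          · obtain ⟨q, ⟨_, hq1⟩, hxq⟩ := Set.mem_iUnion₂.mp hx
            have := cCell_subset_skelLT C (r := r + 1) (by omega) hxq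
            exact this
      rw [key]
      apply IsClosed.inter _ (isClosed_cCell C p)
      apply IsClosed.union ih
      apply Set.Finite.isClosed_biUnion (hTfin.subset (Set.sep_subset _ _))
      exact fun q _ => isClosed_cCell C q

lemma isClosed_skeleton (r : ℕ) : IsClosed (C.skeleton r) := by
  rw [skeleton_eq_skelLT]; exact isClosed_skelLT C _

lemma oCell_disjoint_skeleton {p : Σ m, C.cell m} {r : ℕ} (h : r < p.1) :
    oCell C p ∩ C.skeleton r = ∅ := by
  rw [skeleton_eq_skelLT]
  ext x
  simp only [Set.mem_inter_iff, Set.mem_empty_iff_false, iff_false, not_and]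
  intro hx hx'
  obtain ⟨q, hq⟩ := Set.mem_iUnion.mp hx'
  obtain ⟨hqlt, hxq⟩ := Set.mem_iUnion.mp hq
  obtain rfl := cell_unique C hx hxq
  omega

/-- weak topology relative to a skeleton -/
lemma isClosed_of_skeleton_pieces {m : ℕ} {B : Set X} (hB : B ⊆ C.skeleton m)
    (h : ∀ p : Σ m', C.cell m', p.1 ≤ m → IsClosed (amap C p ⁻¹' B)) : IsClosed B := by
  apply isClosed_of_inter_cCell
  intro p
  by_cases hp : p.1 ≤ m
  · exact inter_cCell_closed C p (h p hp)
  · set T := {q : Σ m', C.cell m' | (oCell C q ∩ cCell C p).Nonempty} with hT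
    have hTfin : T.Finite := finite_touching C p
    have key : B ∩ cCell C p =
        (⋃ q ∈ {q ∈ T | q.1 ≤ m}, B ∩ cCell C q) ∩ cCell C p := by
      ext x
      simp only [Set.mem_inter_iff]
      constructor
      · rintro ⟨hxB, hxc⟩
        refine ⟨?_, hxc⟩
        have hx' : x ∈ C.skeleton m := hB hxB
        rw [skeleton_eq_skelLT] at hx'
        obtain ⟨q, hq⟩ := Set.mem_iUnion.mp hx'
        obtain ⟨hqlt, hxq⟩ := Set.mem_iUnion.mp hq
        exact Set.mem_biUnion ⟨⟨x, hxq, hxc⟩, by omega⟩ ⟨hxB, oCell_subset_cCell C q hxq⟩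
      · rintro ⟨hx, hxc⟩
        obtain ⟨q, _, hxq⟩ := Set.mem_iUnion₂.mp hx
        exact ⟨hxq.1, hxc⟩
    rw [key]
    apply IsClosed.inter _ (isClosed_cCell C p)
    apply Set.Finite.isClosed_biUnion (hTfin.subset (Set.sep_subset _ _))
    intro q hq
    exact inter_cCell_closed C q (h q hq.2)

end CWProof
namespace CWProof
open unitInterval
set_option linter.unusedSectionVars false

variable {X : Type*} [TopologicalSpace X] [T2Space X] (C : CWStructure X)

lemma continuous_of_isEmpty {α β : Type*} [TopologicalSpace α] [TopologicalSpace β]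
    [IsEmpty α] (f : α → β) : Continuous f :=
  continuous_def.mpr fun s _ => by
    rw [Set.eq_empty_of_isEmpty (f ⁻¹' s)]; exact isOpen_empty

def dzero (m : ℕ) : ↥(CWDisk m) := ⟨0, Metric.mem_closedBall_self zero_le_one⟩

def cent (p : Σ m, C.cell m) : X := amap C p (dzero p.1)

lemma dzero_mem_ball (m : ℕ) : dzero m ∈ ball m := by
  simp [ball, dzero]

lemma cent_mem_oCell (p : Σ m, C.cell m) : cent C p ∈ oCell C p :=
  ⟨dzero p.1, dzero_mem_ball p.1, rfl⟩

def centers (d : ℕ) : Set X := ⋃ i : C.cell d, {cent C ⟨d, i⟩}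

lemma isClosed_centers (d : ℕ) : IsClosed (centers C d) := by
  apply isClosed_of_inter_cCell
  intro p
  set T := {q : Σ m', C.cell m' | (oCell C q ∩ cCell C p).Nonempty} with hT
  have hTfin : T.Finite := finite_touching C p
  have key : centers C d ∩ cCell C p =
      (⋃ q ∈ {q ∈ T | q.1 = d}, ({cent C q} : Set X)) ∩ cCell C p := by
    ext x
    simp only [Set.mem_inter_iff, and_congr_left_iff]
    intro hxc
    constructor
    · intro hx
      obtain ⟨i, hi⟩ := Set.mem_iUnion.mp hx
      rcases hi with rfl
      exact Set.mem_biUnion ⟨⟨_, cent_mem_oCell C ⟨d, i⟩, hxc⟩, rfl⟩ rfl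
    · intro hx
      obtain ⟨q, ⟨_, hq1⟩, hxq⟩ := Set.mem_iUnion₂.mp hx
      rcases hxq with rfl
      obtain ⟨qd, qi⟩ := q
      cases hq1
      exact Set.mem_iUnion.mpr ⟨qi, rfl⟩
  rw [key]
  apply IsClosed.inter _ (isClosed_cCell C p)
  apply Set.Finite.isClosed_biUnion (hTfin.subset (Set.sep_subset _ _))
  exact fun q _ => isClosed_singleton

lemma amap_preimage_inter {q : Σ m', C.cell m'} {m : ℕ} (hq : q.1 ≤ m) (V : Set X) :
    amap C q ⁻¹' (V ∩ C.skeleton m) = amap C q ⁻¹' V := by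
  ext y
  simp only [Set.mem_preimage, Set.mem_inter_iff, and_iff_left_iff_imp]
  intro _
  exact cCell_subset_skeleton C hq (Set.mem_range_self y)

/-- Openness in `(V ∩ skeleton m) × I` can be checked on cells of dimension `≤ m`. -/
lemma isOpen_pieces {m : ℕ} {V : Set X} (hV : IsOpen V)
    (W : Set (↥(V ∩ C.skeleton m) × I))
    (h : ∀ (p : Σ m', C.cell m'), p.1 ≤ m →
      IsOpen ((fun z : ↥(amap C p ⁻¹' (V ∩ C.skeleton m)) × I =>
        ((⟨amap C p z.1.1, z.1.2⟩ : ↥(V ∩ C.skeleton m)), z.2)) ⁻¹' W)) :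
    IsOpen W := by
  rw [isOpen_prod_iff]
  intro a b hab
  have haskel : (a : X) ∈ skelLT C (m+1) := by
    rw [← skeleton_eq_skelLT]; exact a.2.2
  obtain ⟨p, hp⟩ := Set.mem_iUnion.mp haskel
  obtain ⟨hplt, y₀, hy₀b, hy₀⟩ := Set.mem_iUnion.mp hp
  have hple : p.1 ≤ m := Nat.lt_succ_iff.mp hplt
  set pre := amap C p ⁻¹' (V ∩ C.skeleton m) with hpre
  have hy₀pre : y₀ ∈ pre := by rw [hpre, Set.mem_preimage, hy₀]; exact a.2
  set y₀' : ↥pre := ⟨y₀, hy₀pre⟩ with hy₀'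
  set emb := fun z : ↥pre × I =>
    ((⟨amap C p z.1.1, z.1.2⟩ : ↥(V ∩ C.skeleton m)), z.2) with hemb
  have hWp : IsOpen (emb ⁻¹' W) := h p hple
  -- the slice through `a` is open
  have hsl : IsOpen {s : I | (a, s) ∈ W} := by
    have hset : {s : I | (a, s) ∈ W} = (fun s => (y₀', s)) ⁻¹' (emb ⁻¹' W) := by
      ext s
      have : emb (y₀', s) = (a, s) := by
        simp only [hemb]
        congr 1
        exact Subtype.ext hy₀
      simp [Set.mem_preimage, this]
    rw [hset]
    exact hWp.preimage (by fun_prop)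
  obtain ⟨ε, hε, hball⟩ := Metric.isOpen_iff.mp hsl b hab
  set J : Set I := Metric.closedBall b (ε/2) with hJ
  have hJsub : J ⊆ {s : I | (a, s) ∈ W} := fun s hs =>
    hball (Metric.mem_ball.mpr (lt_of_le_of_lt (Metric.mem_closedBall.mp hs) (by linarith)))
  have hJcomp : IsCompact J := Metric.isClosed_closedBall.isCompact
  set S : Set ↥(V ∩ C.skeleton m) := {x | ∀ s ∈ J, (x, s) ∈ W} with hS
  have haS : a ∈ S := fun s hs => hJsub hs
  have hSopen : IsOpen S := by
    set F := C.skeleton m \ (Subtype.val '' S) with hF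
    have hFclosed : IsClosed F := by
      apply isClosed_of_skeleton_pieces C Set.diff_subset
      intro q hq
      have hpreim : amap C q ⁻¹' F =
          (amap C q ⁻¹' (Subtype.val '' S))ᶜ := by
        ext y
        simp only [hF, Set.mem_preimage, Set.mem_diff, Set.mem_compl_iff]
        have : amap C q y ∈ C.skeleton m := cCell_subset_skeleton C hq (Set.mem_range_self y)
        tauto
      rw [hpreim]
      refine IsOpen.isClosed_compl ?_
      set preq := amap C q ⁻¹' (V ∩ C.skeleton m) with hpreq
      set embq := fun z : ↥preq × I =>
        ((⟨amap C q z.1.1, z.1.2⟩ : ↥(V ∩ C.skeleton m)), z.2) with hembq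
      have hWq : IsOpen (embq ⁻¹' W) := h q hq
      set K : Set ↥preq := {y | ∀ s ∈ J, embq (y, s) ∈ W} with hK
      have hKopen : IsOpen K := by
        rw [isOpen_iff_forall_mem_open]
        intro y hy
        have hsub : ({y} : Set ↥preq) ×ˢ J ⊆ embq ⁻¹' W := by
          rintro ⟨y', s⟩ ⟨hy', hsJ⟩
          rcases hy' with rfl
          exact hy s hsJ
        obtain ⟨u, v, hu, hv, hyu, hJv, huv⟩ :=
          generalized_tube_lemma isCompact_singleton hJcomp hWq hsub
        refine ⟨u, ?_, hu, hyu rfl⟩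
        intro y' hy' s hsJ
        exact huv ⟨hy', hJv hsJ⟩
      have hpreqopen : IsOpen preq := by
        rw [hpreq, amap_preimage_inter C hq V]
        exact hV.preimage (amap C q).continuous
      have himgopen : IsOpen (Subtype.val '' K) :=
        hpreqopen.isOpenMap_subtype_val K hKopen
      have heq : amap C q ⁻¹' (Subtype.val '' S) = Subtype.val '' K := by
        ext y
        simp only [Set.mem_preimage, Set.mem_image]
        constructor
        · rintro ⟨x, hxS, hxval⟩
          have hmem : y ∈ preq :=
            show amap C q y ∈ V ∩ C.skeleton m from hxval ▸ x.2
          refine ⟨⟨y, hmem⟩, ?_, rfl⟩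
          intro s hsJ
          have h2 := hxS s hsJ
          have hx' : x = (⟨amap C q y, hmem⟩ : ↥(V ∩ C.skeleton m)) := Subtype.ext hxval
          rw [hx'] at h2
          exact h2
        · rintro ⟨yk, hyk, rfl⟩
          exact ⟨⟨amap C q yk.1, yk.2⟩, fun s hsJ => hyk s hsJ, rfl⟩
      rw [heq]
      exact himgopen
    have hSval : Subtype.val ⁻¹' Fᶜ = S := by
      ext x
      simp only [Set.mem_preimage, Set.mem_compl_iff, hF, Set.mem_diff, not_and, not_not]
      constructor
      · intro hx
        obtain ⟨x', hx'S, hval⟩ := hx x.2.2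
        rwa [← Subtype.ext hval]
      · intro hxS _
        exact ⟨x, hxS, rfl⟩
    rw [← hSval]
    exact (hFclosed.isOpen_compl).preimage continuous_subtype_val
  refine ⟨S, Metric.ball b (ε/2), hSopen, Metric.isOpen_ball, haS,
    Metric.mem_ball_self (by linarith), ?_⟩
  rintro ⟨x, s⟩ ⟨hxS, hs⟩
  exact hxS s (Metric.ball_subset_closedBall hs)

end CWProof
namespace CWProof
open unitInterval
set_option linter.unusedSectionVars false

variable {X : Type*} [TopologicalSpace X] [T2Space X] (C : CWStructure X)

lemma continuous_pieces {m : ℕ} {V : Set X} (hV : IsOpen V) {Y : Type*} [TopologicalSpace Y]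
    (f : ↥(V ∩ C.skeleton m) × I → Y)
    (h : ∀ (p : Σ m', C.cell m'), p.1 ≤ m →
      Continuous (fun z : ↥(amap C p ⁻¹' (V ∩ C.skeleton m)) × I =>
        f (⟨amap C p z.1.1, z.1.2⟩, z.2))) :
    Continuous f := by
  rw [continuous_def]
  intro O hO
  exact isOpen_pieces C hV _ (fun p hp => (h p hp).isOpen_preimage O hO)

lemma mem_skeleton_iff {x : X} {m : ℕ} :
    x ∈ C.skeleton m ↔ ∃ q : Σ m', C.cell m', q.1 ≤ m ∧ x ∈ oCell C q := by
  rw [skeleton_eq_skelLT, skelLT]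
  constructor
  · intro hx
    obtain ⟨q, hq⟩ := Set.mem_iUnion.mp hx
    obtain ⟨hqlt, hxq⟩ := Set.mem_iUnion.mp hq
    exact ⟨q, Nat.lt_succ_iff.mp hqlt, hxq⟩
  · rintro ⟨q, hq, hxq⟩
    exact Set.mem_iUnion.mpr ⟨q, Set.mem_iUnion.mpr ⟨Nat.lt_succ_of_le hq, hxq⟩⟩

def scaleI {m : ℕ} (y : ↥(CWDisk m)) (t : I) : ↥(CWDisk m) :=
  ⟨((1 - t.1) + t.1 * ‖(y : EuclideanSpace ℝ (Fin m))‖⁻¹) • (y : EuclideanSpace ℝ (Fin m)), by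
    rcases eq_or_ne (y : EuclideanSpace ℝ (Fin m)) 0 with h0 | h0
    · simp [h0]
    · have hy : ‖(y : EuclideanSpace ℝ (Fin m))‖ ≤ 1 := mem_closedBall_zero_iff.mp y.2
      have hypos : 0 < ‖(y : EuclideanSpace ℝ (Fin m))‖ := norm_pos_iff.mpr h0
      have ht0 : 0 ≤ t.1 := t.2.1
      have ht1 : t.1 ≤ 1 := t.2.2
      rw [mem_closedBall_zero_iff, norm_smul, Real.norm_eq_abs,
        abs_of_nonneg (add_nonneg (by linarith) (by positivity))]
      have hinv : ‖(y : EuclideanSpace ℝ (Fin m))‖⁻¹ * ‖(y : EuclideanSpace ℝ (Fin m))‖ = 1 :=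
        inv_mul_cancel₀ hypos.ne'
      nlinarith⟩

lemma scaleI_zero {m : ℕ} (y : ↥(CWDisk m)) : scaleI y 0 = y := by
  apply Subtype.ext
  simp [scaleI]

lemma scaleI_boundary {m : ℕ} {y : ↥(CWDisk m)}
    (hy : ‖(y : EuclideanSpace ℝ (Fin m))‖ = 1) (t : I) : scaleI y t = y := by
  apply Subtype.ext
  simp [scaleI, hy]

lemma scaleI_coe {m : ℕ} (y : ↥(CWDisk m)) (t : I) :
    ((scaleI y t : ↥(CWDisk m)) : EuclideanSpace ℝ (Fin m)) =
      ((1 - t.1) + t.1 * ‖(y : EuclideanSpace ℝ (Fin m))‖⁻¹) • (y : EuclideanSpace ℝ (Fin m)) :=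
  rfl

lemma scaleI_mem_ball {m : ℕ} {y : ↥(CWDisk m)} (hy : y ∈ ball m) {t : I}
    (ht : t.1 ≠ 1) : scaleI y t ∈ ball m := by
  rcases eq_or_ne (y : EuclideanSpace ℝ (Fin m)) 0 with h0 | h0
  · simp [ball, scaleI, h0]
  · have hy1 : ‖(y : EuclideanSpace ℝ (Fin m))‖ < 1 := hy
    have hypos : 0 < ‖(y : EuclideanSpace ℝ (Fin m))‖ := norm_pos_iff.mpr h0
    have ht0 : 0 ≤ t.1 := t.2.1
    have ht1 : t.1 ≤ 1 := t.2.2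
    have ht1' : t.1 < 1 := lt_of_le_of_ne ht1 ht
    show ‖((scaleI y t : ↥(CWDisk m)) : EuclideanSpace ℝ (Fin m))‖ < 1
    rw [scaleI_coe, norm_smul, Real.norm_eq_abs, abs_of_nonneg (add_nonneg (by linarith) (by positivity))]
    have hinv : ‖(y : EuclideanSpace ℝ (Fin m))‖⁻¹ * ‖(y : EuclideanSpace ℝ (Fin m))‖ = 1 :=
      inv_mul_cancel₀ hypos.ne'
    nlinarith

lemma scaleI_one_norm {m : ℕ} {y : ↥(CWDisk m)} (h0 : (y : EuclideanSpace ℝ (Fin m)) ≠ 0) :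
    ‖((scaleI y 1 : ↥(CWDisk m)) : EuclideanSpace ℝ (Fin m))‖ = 1 := by
  have hypos : 0 < ‖(y : EuclideanSpace ℝ (Fin m))‖ := norm_pos_iff.mpr h0
  rw [scaleI_coe, norm_smul, Real.norm_eq_abs]
  simp only [Icc.coe_one, sub_self, one_mul, zero_add]
  rw [abs_of_nonneg (by positivity)]
  exact inv_mul_cancel₀ hypos.ne'

open Classical in
def pushFun (d : ℕ) (x : X) (t : I) : X :=
  if h : ∃ z : (Σ _i : C.cell d, ↥(CWDisk d)), z.2 ∈ ball d ∧ C.attach d z.1 z.2 = x then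
    C.attach d h.choose.1 (scaleI h.choose.2 t)
  else x

lemma pushFun_eq_self {d : ℕ} {x : X} (t : I) (hx : ∀ i : C.cell d, x ∉ oCell C ⟨d, i⟩) :
    pushFun C d x t = x := by
  rw [pushFun, dif_neg]
  rintro ⟨z, hz1, hz2⟩
  exact hx z.1 ⟨z.2, hz1, hz2⟩

lemma pushFun_eq {d : ℕ} {i : C.cell d} {y : ↥(CWDisk d)} (hy : y ∈ ball d) (t : I) :
    pushFun C d (C.attach d i y) t = C.attach d i (scaleI y t) := by
  have hE : ∃ z : (Σ _i : C.cell d, ↥(CWDisk d)), z.2 ∈ ball d ∧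
      C.attach d z.1 z.2 = C.attach d i y := ⟨⟨i, y⟩, hy, rfl⟩
  rw [pushFun, dif_pos hE]
  obtain ⟨hz1, hz2⟩ := hE.choose_spec
  have hcell : (⟨d, hE.choose.1⟩ : Σ m, C.cell m) = ⟨d, i⟩ :=
    cell_unique C ⟨hE.choose.2, hz1, hz2⟩ ⟨y, hy, rfl⟩
  have hii : hE.choose.1 = i := eq_of_heq (Sigma.mk.inj_iff.mp hcell).2
  rw [hii] at hz2 ⊢
  have hyy : hE.choose.2 = y := coord_unique C (p := ⟨d, i⟩) hz1 hy hz2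
  rw [hyy]

lemma pushFun_zero (d : ℕ) (x : X) : pushFun C d x 0 = x := by
  by_cases h : ∃ i : C.cell d, x ∈ oCell C ⟨d, i⟩
  · obtain ⟨i, y, hy, rfl⟩ := h
    show pushFun C d (C.attach d i y) 0 = C.attach d i y
    rw [pushFun_eq C hy, scaleI_zero]
  · push_neg at h
    exact pushFun_eq_self C 0 h

lemma notMem_dcell_of_skeleton {d : ℕ} {x : X} (hx : x ∈ C.skeleton (d - 1)) (hd : 1 ≤ d)
    (i : C.cell d) : x ∉ oCell C ⟨d, i⟩ := by
  intro hxi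
  have := oCell_disjoint_skeleton C (p := ⟨d, i⟩) (r := d - 1) (by show d - 1 < d; omega)
  exact Set.eq_empty_iff_forall_notMem.mp this x ⟨hxi, hx⟩


end CWProof
namespace CWProof
open unitInterval
set_option linter.unusedSectionVars false

variable {X : Type*} [TopologicalSpace X] [T2Space X] (C : CWStructure X)

lemma push_homotopy (d : ℕ) (hd : 1 ≤ d) :
    ∃ H : C(↥((centers C d)ᶜ ∩ C.skeleton d) × I, X),
      (∀ x, H (x, 0) = x.1) ∧
      (∀ x, H (x, 1) ∈ C.skeleton (d - 1)) ∧
      (∀ x t, x.1 ∈ C.skeleton (d - 1) → H (x, t) = x.1) ∧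
      (∀ x t, t ≠ 1 → H (x, t) = x.1 ∨ ∃ i : C.cell d, H (x, t) ∈ oCell C ⟨d, i⟩) := by
  have hd1 : d - 1 + 1 = d := by omega
  have hVopen : IsOpen (centers C d)ᶜ := (isClosed_centers C d).isOpen_compl
  have hskelLT : skelLT C d = C.skeleton (d - 1) := by
    rw [skeleton_eq_skelLT, hd1]
  have hcases : ∀ x : X, x ∈ (centers C d)ᶜ ∩ C.skeleton d →
      (∃ (i : C.cell d) (y : ↥(CWDisk d)), y ∈ ball d ∧
        (y : EuclideanSpace ℝ (Fin d)) ≠ 0 ∧ C.attach d i y = x) ∨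
      (x ∈ C.skeleton (d - 1) ∧ ∀ i : C.cell d, x ∉ oCell C ⟨d, i⟩) := by
    intro x hx
    obtain ⟨q, hq, hxq⟩ := (mem_skeleton_iff C).mp hx.2
    by_cases hqd : q.1 = d
    · left
      obtain ⟨qd, qi⟩ := q
      dsimp at hqd
      subst hqd
      obtain ⟨y, hy, hxy⟩ := hxq
      refine ⟨qi, y, hy, ?_, hxy⟩
      intro h0
      apply hx.1
      have hxc : x = cent C ⟨qd, qi⟩ := by
        rw [← hxy]
        unfold cent
        congr 1
        exact Subtype.ext h0
      rw [hxc]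
      exact Set.mem_iUnion.mpr ⟨qi, rfl⟩
    · right
      have hxskel : x ∈ C.skeleton (d - 1) :=
        (mem_skeleton_iff C).mpr ⟨q, by omega, hxq⟩
      exact ⟨hxskel, notMem_dcell_of_skeleton C hxskel hd⟩
  refine ⟨⟨fun z => pushFun C d z.1.1 z.2, ?_⟩, ?_, ?_, ?_, ?_⟩
  · -- continuity
    apply continuous_pieces C hVopen
    intro p hp
    by_cases hpd : p.1 = d
    · obtain ⟨pd, pi⟩ := p
      dsimp at hpd
      subst hpd
      have hne : ∀ z : ↥(amap C ⟨pd, pi⟩ ⁻¹' ((centers C pd)ᶜ ∩ C.skeleton pd)) × I,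
          (z.1.1 : EuclideanSpace ℝ (Fin pd)) ≠ 0 := by
        intro z h0
        have hz : amap C ⟨pd, pi⟩ z.1.1 ∈ (centers C pd)ᶜ := z.1.2.1
        apply hz
        have : z.1.1 = dzero pd := Subtype.ext h0
        rw [this]
        exact Set.mem_iUnion.mpr ⟨pi, rfl⟩
      have hfun : ∀ z : ↥(amap C ⟨pd, pi⟩ ⁻¹' ((centers C pd)ᶜ ∩ C.skeleton pd)) × I,
          pushFun C pd (amap C ⟨pd, pi⟩ z.1.1) z.2 = C.attach pd pi (scaleI z.1.1 z.2) := by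
        intro z
        rcases lt_or_eq_of_le (mem_closedBall_zero_iff.mp z.1.1.2) with hlt | heq
        · exact pushFun_eq C hlt z.2
        · rw [scaleI_boundary heq]
          apply pushFun_eq_self
          intro i hi
          have hbd : amap C ⟨pd, pi⟩ z.1.1 ∈ skelLT C pd :=
            C.boundary pd pi (Set.mem_image_of_mem _ (show ‖_‖ = 1 from heq))
          rw [hskelLT] at hbd
          exact notMem_dcell_of_skeleton C hbd hd i hi
      have hcont : Continuous fun z :
          ↥(amap C ⟨pd, pi⟩ ⁻¹' ((centers C pd)ᶜ ∩ C.skeleton pd)) × I =>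
          C.attach pd pi (scaleI z.1.1 z.2) := by
        apply (C.attach pd pi).continuous.comp
        apply Continuous.subtype_mk
        have hval : Continuous fun z :
            ↥(amap C ⟨pd, pi⟩ ⁻¹' ((centers C pd)ᶜ ∩ C.skeleton pd)) × I =>
            (z.1.1 : EuclideanSpace ℝ (Fin pd)) :=
          continuous_subtype_val.comp (continuous_subtype_val.comp continuous_fst)
        have ht : Continuous fun z :
            ↥(amap C ⟨pd, pi⟩ ⁻¹' ((centers C pd)ᶜ ∩ C.skeleton pd)) × I =>
            (z.2 : ℝ) :=
          continuous_subtype_val.comp continuous_snd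
        exact ((continuous_const.sub ht).add
          (ht.mul ((hval.norm).inv₀ (fun z => norm_ne_zero_iff.mpr (hne z))))).smul hval
      exact hcont.congr (fun z => (hfun z).symm)
    · have hfun : ∀ z : ↥(amap C p ⁻¹' ((centers C d)ᶜ ∩ C.skeleton d)) × I,
          pushFun C d (amap C p z.1.1) z.2 = amap C p z.1.1 := by
        intro z
        apply pushFun_eq_self
        apply notMem_dcell_of_skeleton C _ hd
        exact cCell_subset_skeleton C (by omega) (Set.mem_range_self _)
      have hcont : Continuous fun z :
          ↥(amap C p ⁻¹' ((centers C d)ᶜ ∩ C.skeleton d)) × I => amap C p z.1.1 :=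
        (amap C p).continuous.comp (continuous_subtype_val.comp continuous_fst)
      exact hcont.congr (fun z => (hfun z).symm)
  · intro x
    exact pushFun_zero C d x.1
  · intro x
    rcases hcases x.1 x.2 with ⟨i, y, hy, h0, hxy⟩ | ⟨hskel, hno⟩
    · show pushFun C d x.1 1 ∈ _
      rw [← hxy, pushFun_eq C hy]
      have hbd : C.attach d i (scaleI y 1) ∈ skelLT C d :=
        C.boundary d i (Set.mem_image_of_mem _ (scaleI_one_norm h0))
      rwa [hskelLT] at hbd
    · show pushFun C d x.1 1 ∈ _
      rw [pushFun_eq_self C 1 hno]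
      exact hskel
  · intro x t hx
    exact pushFun_eq_self C t (notMem_dcell_of_skeleton C hx hd)
  · intro x t ht
    rcases hcases x.1 x.2 with ⟨i, y, hy, h0, hxy⟩ | ⟨hskel, hno⟩
    · right
      refine ⟨i, ?_⟩
      show pushFun C d x.1 t ∈ oCell C ⟨d, i⟩
      rw [← hxy, pushFun_eq C hy]
      exact ⟨scaleI y t, scaleI_mem_ball hy (fun h1 => ht (Subtype.ext h1)), rfl⟩
    · left
      exact pushFun_eq_self C t hno

end CWProof
namespace CWProof
open unitInterval
set_option linter.unusedSectionVars false

variable {X : Type*} [TopologicalSpace X] [T2Space X] (C : CWStructure X)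

def sigI (t : I) : I :=
  ⟨min 1 (2 * t.1), le_min zero_le_one (mul_nonneg (by norm_num) t.2.1), min_le_left _ _⟩

def tauI (t : I) : I :=
  ⟨max 0 (2 * t.1 - 1), le_max_left _ _, max_le zero_le_one (by linarith [t.2.2])⟩

lemma continuous_sigI : Continuous sigI :=
  (continuous_const.min (continuous_const.mul continuous_subtype_val)).subtype_mk _

lemma continuous_tauI : Continuous tauI :=
  (continuous_const.max ((continuous_const.mul continuous_subtype_val).sub
    continuous_const)).subtype_mk _

lemma sigI_zero : sigI 0 = 0 := by
  apply Subtype.ext; simp [sigI]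

lemma tauI_one : tauI 1 = 1 := by
  apply Subtype.ext; simp [tauI]; norm_num

lemma sigI_half {t : I} (h : t.1 = 1/2) : sigI t = 1 := by
  apply Subtype.ext; simp [sigI, h]

lemma tauI_half {t : I} (h : t.1 = 1/2) : tauI t = 0 := by
  apply Subtype.ext; simp [tauI, h]

def contractPt {m : ℕ} (y : ↥(CWDisk m)) (s : I) : ↥(CWDisk m) :=
  ⟨(1 - s.1) • (y : EuclideanSpace ℝ (Fin m)), by
    have hy : ‖(y : EuclideanSpace ℝ (Fin m))‖ ≤ 1 := mem_closedBall_zero_iff.mp y.2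
    have hs0 : 0 ≤ s.1 := s.2.1
    have hs1 : s.1 ≤ 1 := s.2.2
    rw [mem_closedBall_zero_iff, norm_smul, Real.norm_eq_abs, abs_of_nonneg (by linarith)]
    nlinarith⟩

lemma contractPt_zero {m : ℕ} (y : ↥(CWDisk m)) : contractPt y 0 = y := by
  apply Subtype.ext; simp [contractPt]

lemma contractPt_one {m : ℕ} (y : ↥(CWDisk m)) : contractPt y 1 = dzero m := by
  apply Subtype.ext; simp [contractPt, dzero]

lemma contractPt_mem_ball {m : ℕ} {y : ↥(CWDisk m)} (hy : y ∈ ball m) (s : I) :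
    contractPt y s ∈ ball m := by
  have hy1 : ‖(y : EuclideanSpace ℝ (Fin m))‖ < 1 := hy
  have hynn : 0 ≤ ‖(y : EuclideanSpace ℝ (Fin m))‖ := norm_nonneg _
  have hs0 : 0 ≤ s.1 := s.2.1
  have hs1 : s.1 ≤ 1 := s.2.2
  show ‖(1 - s.1) • (y : EuclideanSpace ℝ (Fin m))‖ < 1
  rw [norm_smul, Real.norm_eq_abs, abs_of_nonneg (by linarith)]
  nlinarith

open Classical in
def conFun (d : ℕ) (γ : C.cell d → I → X) (x₀ : X) (z : X × I) : X :=
  if h : ∃ zz : Σ _i : C.cell d, ↥(CWDisk d), zz.2 ∈ ball d ∧ C.attach d zz.1 zz.2 = z.1 then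
    if z.2.1 ≤ 1/2 then C.attach d h.choose.1 (contractPt h.choose.2 (sigI z.2))
    else γ h.choose.1 (tauI z.2)
  else x₀

lemma conFun_eq {d : ℕ} (γ : C.cell d → I → X) (x₀ : X) {i : C.cell d} {y : ↥(CWDisk d)}
    (hy : y ∈ ball d) (t : I) :
    conFun C d γ x₀ (C.attach d i y, t) =
      if t.1 ≤ 1/2 then C.attach d i (contractPt y (sigI t)) else γ i (tauI t) := by
  have hE : ∃ zz : Σ _i : C.cell d, ↥(CWDisk d), zz.2 ∈ ball d ∧
      C.attach d zz.1 zz.2 = C.attach d i y := ⟨⟨i, y⟩, hy, rfl⟩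
  rw [conFun, dif_pos hE]
  obtain ⟨hz1, hz2⟩ := hE.choose_spec
  have hcell : (⟨d, hE.choose.1⟩ : Σ m, C.cell m) = ⟨d, i⟩ :=
    cell_unique C ⟨hE.choose.2, hz1, hz2⟩ ⟨y, hy, rfl⟩
  have hii : hE.choose.1 = i := eq_of_heq (Sigma.mk.inj_iff.mp hcell).2
  rw [hii] at hz2 ⊢
  have hyy : hE.choose.2 = y := coord_unique C (p := ⟨d, i⟩) hz1 hy hz2
  rw [hyy]

lemma contract_homotopy (d k : ℕ) (hk : 1 ≤ k) (hkd : k ≤ d)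
    (hpc : PathConnectedSpace ↥((C.skeleton (k - 1))ᶜ)) (x₀ : X)
    (hx₀ : x₀ ∈ (C.skeleton (k - 1))ᶜ) :
    ∃ F : C(↥((C.skeleton (d - 1))ᶜ ∩ C.skeleton d) × I, X),
      (∀ x, F (x, 0) = x.1) ∧ (∀ x, F (x, 1) = x₀) ∧
      (∀ z, F z ∉ C.skeleton (k - 1)) := by
  have hcent : ∀ i : C.cell d, cent C ⟨d, i⟩ ∈ (C.skeleton (k - 1))ᶜ := by
    intro i
    intro hmem
    have hdisj := oCell_disjoint_skeleton C (p := ⟨d, i⟩) (r := k - 1)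
      (by show k - 1 < d; omega)
    exact Set.eq_empty_iff_forall_notMem.mp hdisj _ ⟨cent_mem_oCell C ⟨d, i⟩, hmem⟩
  set γ : C.cell d → I → X := fun i t =>
    (PathConnectedSpace.somePath (⟨cent C ⟨d, i⟩, hcent i⟩ : ↥((C.skeleton (k - 1))ᶜ))
      ⟨x₀, hx₀⟩ t).1 with hγ
  have hγcont : ∀ i, Continuous (γ i) := fun i =>
    continuous_subtype_val.comp (PathConnectedSpace.somePath _ _).continuous
  have hγ0 : ∀ i, γ i 0 = cent C ⟨d, i⟩ := by intro i; simp [hγ]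
  have hγ1 : ∀ i, γ i 1 = x₀ := by intro i; simp [hγ]
  have hγmem : ∀ i t, γ i t ∉ C.skeleton (k - 1) := by
    intro i t
    exact (PathConnectedSpace.somePath
      (⟨cent C ⟨d, i⟩, hcent i⟩ : ↥((C.skeleton (k - 1))ᶜ)) ⟨x₀, hx₀⟩ t).2
  -- every point of the domain is in an open d-cell
  have hcell : ∀ x : X, x ∈ (C.skeleton (d - 1))ᶜ ∩ C.skeleton d →
      ∃ (i : C.cell d) (y : ↥(CWDisk d)), y ∈ ball d ∧ C.attach d i y = x := by
    intro x hx
    obtain ⟨q, hq, hxq⟩ := (mem_skeleton_iff C).mp hx.2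
    by_cases hqd : q.1 = d
    · obtain ⟨qd, qi⟩ := q
      dsimp at hqd
      subst hqd
      obtain ⟨y, hy, hxy⟩ := hxq
      exact ⟨qi, y, hy, hxy⟩
    · exfalso
      exact hx.1 ((mem_skeleton_iff C).mpr ⟨q, by omega, hxq⟩)
  refine ⟨⟨fun z => conFun C d γ x₀ (z.1.1, z.2), ?_⟩, ?_, ?_, ?_⟩
  · -- continuity
    apply continuous_pieces C (isClosed_skeleton C (d - 1)).isOpen_compl
    intro p hp
    by_cases hpd : p.1 = d
    · obtain ⟨pd, pi⟩ := p
      dsimp at hpd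
      subst hpd
      have hball : ∀ z : ↥(amap C ⟨pd, pi⟩ ⁻¹' ((C.skeleton (pd - 1))ᶜ ∩ C.skeleton pd)),
          z.1 ∈ ball pd := by
        intro z
        rcases lt_or_eq_of_le (mem_closedBall_zero_iff.mp z.1.2) with hlt | heq
        · exact hlt
        · exfalso
          apply z.2.1
          have hbd : amap C ⟨pd, pi⟩ z.1 ∈ skelLT C pd :=
            C.boundary pd pi (Set.mem_image_of_mem _ (show ‖_‖ = 1 from heq))
          have hLT : skelLT C pd = C.skeleton (pd - 1) := by
            rw [skeleton_eq_skelLT, (by omega : pd - 1 + 1 = pd)]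
          rwa [hLT] at hbd
      have hfun : ∀ z : ↥(amap C ⟨pd, pi⟩ ⁻¹'
            ((C.skeleton (pd - 1))ᶜ ∩ C.skeleton pd)) × I,
          conFun C pd γ x₀ (amap C ⟨pd, pi⟩ z.1.1, z.2) =
            (if z.2.1 ≤ 1/2 then C.attach pd pi (contractPt z.1.1 (sigI z.2))
             else γ pi (tauI z.2)) := by
        intro z
        exact conFun_eq C γ x₀ (hball z.1) z.2
      have hcont : Continuous fun z : ↥(amap C ⟨pd, pi⟩ ⁻¹'
            ((C.skeleton (pd - 1))ᶜ ∩ C.skeleton pd)) × I =>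
          (if z.2.1 ≤ 1/2 then C.attach pd pi (contractPt z.1.1 (sigI z.2))
           else γ pi (tauI z.2)) := by
        apply Continuous.if_le
        · apply (C.attach pd pi).continuous.comp
          apply Continuous.subtype_mk
          have hval : Continuous fun z : ↥(amap C ⟨pd, pi⟩ ⁻¹'
                ((C.skeleton (pd - 1))ᶜ ∩ C.skeleton pd)) × I =>
              (z.1.1 : EuclideanSpace ℝ (Fin pd)) :=
            continuous_subtype_val.comp (continuous_subtype_val.comp continuous_fst)
          have hs : Continuous fun z : ↥(amap C ⟨pd, pi⟩ ⁻¹'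
                ((C.skeleton (pd - 1))ᶜ ∩ C.skeleton pd)) × I =>
              ((sigI z.2 : I) : ℝ) :=
            continuous_subtype_val.comp (continuous_sigI.comp continuous_snd)
          exact (continuous_const.sub hs).smul hval
        · exact (hγcont pi).comp (continuous_tauI.comp continuous_snd)
        · exact continuous_subtype_val.comp continuous_snd
        · exact continuous_const
        · intro z hz
          rw [sigI_half hz, tauI_half hz, contractPt_one, hγ0]
          rfl
      exact hcont.congr (fun z => (hfun z).symm)
    · -- lower cells: the domain is empty
      have hempty : amap C p ⁻¹' ((C.skeleton (d - 1))ᶜ ∩ C.skeleton d) = ∅ := by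
        ext y
        simp only [Set.mem_preimage, Set.mem_empty_iff_false, iff_false, Set.mem_inter_iff]
        rintro ⟨h1, _⟩
        exact h1 (cCell_subset_skeleton C (show p.1 ≤ d - 1 by omega) (Set.mem_range_self _))
      haveI : IsEmpty ↥(amap C p ⁻¹' ((C.skeleton (d - 1))ᶜ ∩ C.skeleton d)) := by
        rw [hempty]; exact Set.isEmpty_coe_sort.mpr rfl
      exact continuous_of_isEmpty _
  · intro x
    obtain ⟨i, y, hy, hxy⟩ := hcell x.1 x.2
    show conFun C d γ x₀ (x.1, 0) = x.1
    rw [← hxy, conFun_eq C γ x₀ hy,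
      if_pos (show ((0:I):ℝ) ≤ 1/2 by show (0:ℝ) ≤ 1/2; norm_num),
      sigI_zero, contractPt_zero]
  · intro x
    obtain ⟨i, y, hy, hxy⟩ := hcell x.1 x.2
    show conFun C d γ x₀ (x.1, 1) = x₀
    rw [← hxy, conFun_eq C γ x₀ hy,
      if_neg (show ¬ ((1:I):ℝ) ≤ 1/2 by show ¬ (1:ℝ) ≤ 1/2; norm_num),
      tauI_one, hγ1]
  · rintro ⟨x, t⟩
    obtain ⟨i, y, hy, hxy⟩ := hcell x.1 x.2
    show conFun C d γ x₀ (x.1, t) ∉ _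
    rw [← hxy, conFun_eq C γ x₀ hy]
    by_cases ht : t.1 ≤ 1/2
    · rw [if_pos ht]
      intro hmem
      have hdisj := oCell_disjoint_skeleton C (p := ⟨d, i⟩) (r := k - 1)
        (by show k - 1 < d; omega)
      exact Set.eq_empty_iff_forall_notMem.mp hdisj _
        ⟨⟨contractPt y (sigI t), contractPt_mem_ball hy _, rfl⟩, hmem⟩
    · rw [if_neg ht]
      exact hγmem i (tauI t)

end CWProof
namespace CWProof
open unitInterval
set_option linter.unusedSectionVars false

variable {X : Type*} [TopologicalSpace X] [T2Space X] (C : CWStructure X)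

lemma skeleton_mono {r s : ℕ} (h : r ≤ s) : C.skeleton r ⊆ C.skeleton s := by
  rw [skeleton_eq_skelLT, skeleton_eq_skelLT]
  exact skelLT_mono C (by omega)

lemma main_aux (k : ℕ) (hk : 1 ≤ k) (x₀ : X) (hx₀ : x₀ ∈ (C.skeleton (k - 1))ᶜ)
    (hpc : PathConnectedSpace ↥((C.skeleton (k - 1))ᶜ)) :
    ∀ m : ℕ, ∃ U : ℕ → Set X,
      (∀ j, ∃ V, IsOpen V ∧ U j = V ∩ C.skeleton m) ∧
      (∀ j, (U j).Nonempty → k ≤ j ∧ j ≤ m) ∧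
      (∀ j, U j ∩ C.skeleton (k - 1) = ∅) ∧
      (C.skeleton m ⊆ C.skeleton (k - 1) ∪ ⋃ j, U j) ∧
      (∀ j, ∃ (b : X) (_ : b ∉ C.skeleton (k - 1)) (F : C(↥(U j) × I, X)),
        (∀ x, F (x, 0) = x.1) ∧ (∀ x, F (x, 1) = b) ∧ (∀ z, F z ∉ C.skeleton (k - 1))) := by
  have trivfam : ∀ m : ℕ, C.skeleton m ⊆ C.skeleton (k - 1) →
      ∃ U : ℕ → Set X,
      (∀ j, ∃ V, IsOpen V ∧ U j = V ∩ C.skeleton m) ∧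
      (∀ j, (U j).Nonempty → k ≤ j ∧ j ≤ m) ∧
      (∀ j, U j ∩ C.skeleton (k - 1) = ∅) ∧
      (C.skeleton m ⊆ C.skeleton (k - 1) ∪ ⋃ j, U j) ∧
      (∀ j, ∃ (b : X) (_ : b ∉ C.skeleton (k - 1)) (F : C(↥(U j) × I, X)),
        (∀ x, F (x, 0) = x.1) ∧ (∀ x, F (x, 1) = b) ∧ (∀ z, F z ∉ C.skeleton (k - 1))) := by
    intro m hsub
    refine ⟨fun _ => ∅, fun j => ⟨∅, isOpen_empty, (Set.empty_inter _).symm⟩,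
      fun j h => absurd h (by simp), fun j => Set.empty_inter _,
      fun x hx => Or.inl (hsub hx), fun j => ⟨x₀, hx₀, ContinuousMap.const _ x₀,
      fun x => absurd x.2 (Set.notMem_empty _), fun x => rfl, fun z => hx₀⟩⟩
  intro m
  induction m with
  | zero => exact trivfam 0 (skeleton_mono C (by omega))
  | succ m IH =>
    by_cases hd : k ≤ m + 1
    swap
    · exact trivfam (m + 1) (skeleton_mono C (by omega))
    obtain ⟨U, hrel, hbound, hdisj, hcover, hhtp⟩ := IH
    obtain ⟨H, hH0, hH1, hHfix, hHmid⟩ := push_homotopy C (m + 1) (by omega)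
    simp only [Nat.add_sub_cancel] at hH1 hHfix
    have hρcont : Continuous (fun x : ↥((centers C (m + 1))ᶜ ∩ C.skeleton (m + 1)) => H (x, 1)) :=
      H.continuous.comp (continuous_id.prodMk continuous_const)
    obtain ⟨FO, hFO0, hFO1, hFOmem⟩ :=
      contract_homotopy C (m + 1) k hk (by omega) hpc x₀ hx₀
    set U' : ℕ → Set X := fun j => if j = m + 1 then ((C.skeleton (m + 1 - 1))ᶜ ∩ C.skeleton (m + 1))
      else Subtype.val '' ((fun x : ↥((centers C (m + 1))ᶜ ∩ C.skeleton (m + 1)) => H (x, 1)) ⁻¹' (U j)) with hU'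
    have hU'm1 : U' (m + 1) = ((C.skeleton (m + 1 - 1))ᶜ ∩ C.skeleton (m + 1)) := if_pos rfl
    have hU'j : ∀ j, j ≠ m + 1 →
        U' j = Subtype.val '' ((fun x : ↥((centers C (m + 1))ᶜ ∩ C.skeleton (m + 1)) => H (x, 1)) ⁻¹' (U j)) := fun j hj => if_neg hj
    have hsubA : ∀ j, j ≠ m + 1 → U' j ⊆ ((centers C (m + 1))ᶜ ∩ C.skeleton (m + 1)) := by
      intro j hj
      rw [hU'j j hj]
      exact Subtype.coe_image_subset _ _
    have hmA : ∀ x : X, x ∈ C.skeleton m → x ∈ ((centers C (m + 1))ᶜ ∩ C.skeleton (m + 1)) := by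
      intro x hx
      refine ⟨?_, skeleton_mono C (by omega) hx⟩
      intro hxc
      obtain ⟨i, hi⟩ := Set.mem_iUnion.mp hxc
      rcases hi with rfl
      have hdisj2 := oCell_disjoint_skeleton C (p := ⟨m + 1, i⟩) (r := m)
        (by show m < m + 1; omega)
      exact Set.eq_empty_iff_forall_notMem.mp hdisj2 _ ⟨cent_mem_oCell C ⟨m + 1, i⟩, hx⟩
    have hdisj' : ∀ j, U' j ∩ C.skeleton (k - 1) = ∅ := by
      intro j
      by_cases hj : j = m + 1
      · subst hj
        rw [hU'm1]
        ext x
        simp only [Set.mem_inter_iff, Set.mem_empty_iff_false, iff_false, not_and]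
        rintro ⟨hx1, _⟩ hx2
        exact hx1 (skeleton_mono C (by omega) hx2)
      · rw [hU'j j hj]
        ext x
        simp only [Set.mem_inter_iff, Set.mem_empty_iff_false, iff_false, not_and]
        rintro ⟨a, ha, rfl⟩ hx2
        have ha' : H (a, 1) ∈ U j := ha
        have hfix : H (a, 1) = a.1 := hHfix a 1 (skeleton_mono C (by omega) hx2)
        rw [hfix] at ha'
        exact Set.eq_empty_iff_forall_notMem.mp (hdisj j) _ ⟨ha', hx2⟩
    refine ⟨U', ?_, ?_, hdisj', ?_, ?_⟩
    · -- relative openness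
      intro j
      by_cases hj : j = m + 1
      · subst hj
        rw [hU'm1]
        exact ⟨(C.skeleton (m + 1 - 1))ᶜ, (isClosed_skeleton C _).isOpen_compl, rfl⟩
      · obtain ⟨V, hV, hUV⟩ := hrel j
        have hpre : (fun x : ↥((centers C (m + 1))ᶜ ∩ C.skeleton (m + 1)) => H (x, 1)) ⁻¹' (U j) =
            (fun x : ↥((centers C (m + 1))ᶜ ∩ C.skeleton (m + 1)) => H (x, 1)) ⁻¹' V := by
          ext x
          simp only [Set.mem_preimage, hUV, Set.mem_inter_iff, and_iff_left_iff_imp]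
          intro _
          exact hH1 x
        have hopen : IsOpen ((fun x : ↥((centers C (m + 1))ᶜ ∩ C.skeleton (m + 1)) => H (x, 1)) ⁻¹' (U j)) := by
          rw [hpre]
          exact hρcont.isOpen_preimage V hV
        obtain ⟨W, hW, hWeq⟩ := isOpen_induced_iff.mp hopen
        rw [hU'j j hj, ← hWeq, Set.image_preimage_eq_inter_range, Subtype.range_coe]
        exact ⟨W ∩ (centers C (m + 1))ᶜ, hW.inter (isClosed_centers C (m + 1)).isOpen_compl,
          by rw [Set.inter_assoc]⟩
    · -- bounds
      intro j hne
      by_cases hj : j = m + 1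
      · omega
      · rw [hU'j j hj] at hne
        obtain ⟨x, a, ha, rfl⟩ := hne
        have ha' : H (a, 1) ∈ U j := ha
        have := hbound j ⟨H (a, 1), ha'⟩
        omega
    · -- cover
      intro x hx
      by_cases hxk : x ∈ C.skeleton (k - 1)
      · exact Or.inl hxk
      right
      by_cases hxm : x ∈ C.skeleton m
      · rcases hcover hxm with hc | hc
        · exact absurd hc hxk
        obtain ⟨j, hj⟩ := Set.mem_iUnion.mp hc
        have hjb := hbound j ⟨x, hj⟩
        have hjne : j ≠ m + 1 := by omega
        have hxA : x ∈ ((centers C (m + 1))ᶜ ∩ C.skeleton (m + 1)) := hmA x hxm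
        refine Set.mem_iUnion.mpr ⟨j, ?_⟩
        rw [hU'j j hjne]
        refine ⟨⟨x, hxA⟩, ?_, rfl⟩
        show H (⟨x, hxA⟩, 1) ∈ U j
        rw [hHfix ⟨x, hxA⟩ 1 hxm]
        exact hj
      · refine Set.mem_iUnion.mpr ⟨m + 1, ?_⟩
        rw [hU'm1]
        exact ⟨by simpa using hxm, hx⟩
    · -- homotopies
      intro j
      by_cases hj : j = m + 1
      · subst hj
        have hOsub : U' (m + 1) ⊆ ((C.skeleton (m + 1 - 1))ᶜ ∩ C.skeleton (m + 1)) := le_of_eq hU'm1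
        refine ⟨x₀, hx₀, ⟨fun z => FO (⟨z.1.1, hOsub z.1.2⟩, z.2), ?_⟩, ?_, ?_, ?_⟩
        · exact FO.continuous.comp (((continuous_subtype_val.comp
            continuous_fst).subtype_mk _).prodMk continuous_snd)
        · intro x
          simp only [ContinuousMap.coe_mk]
          exact hFO0 ⟨x.1, hOsub x.2⟩
        · intro x
          simp only [ContinuousMap.coe_mk]
          exact hFO1 ⟨x.1, hOsub x.2⟩
        · intro z
          simp only [ContinuousMap.coe_mk]
          exact hFOmem _
      · obtain ⟨b, hb, F, hF0, hF1, hFmem⟩ := hhtp j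
        have hsub := hsubA j hj
        have hρU : ∀ x : ↥(U' j), H (⟨x.1, hsub x.2⟩, 1) ∈ U j := by
          intro x
          have hx2 : x.1 ∈ Subtype.val '' ((fun x : ↥((centers C (m + 1))ᶜ ∩
              C.skeleton (m + 1)) => H (x, 1)) ⁻¹' (U j)) := by
            rw [← hU'j j hj]; exact x.2
          obtain ⟨a, ha, hav⟩ := hx2
          have ha' : H (a, 1) ∈ U j := ha
          have heq : a = (⟨x.1, hsub x.2⟩ : ↥((centers C (m + 1))ᶜ ∩ C.skeleton (m + 1))) := Subtype.ext hav
          rwa [heq] at ha'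
        refine ⟨b, hb, ⟨fun z =>
          if z.2.1 ≤ 1/2 then H (⟨z.1.1, hsub z.1.2⟩, sigI z.2)
          else F (⟨H (⟨z.1.1, hsub z.1.2⟩, 1), hρU z.1⟩, tauI z.2), ?_⟩, ?_, ?_, ?_⟩
        · apply Continuous.if_le
          · exact H.continuous.comp ((((continuous_subtype_val.comp
              continuous_fst).subtype_mk _)).prodMk (continuous_sigI.comp continuous_snd))
          · refine F.continuous.comp (Continuous.prodMk ?_
              (continuous_tauI.comp continuous_snd))
            refine Continuous.subtype_mk ?_ _
            exact H.continuous.comp ((((continuous_subtype_val.comp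
              continuous_fst).subtype_mk _)).prodMk continuous_const)
          · exact continuous_subtype_val.comp continuous_snd
          · exact continuous_const
          · intro z hz
            rw [sigI_half hz, tauI_half hz, hF0]
        · intro x
          simp only [ContinuousMap.coe_mk]
          rw [if_pos (show ((0:I):ℝ) ≤ 1/2 by show (0:ℝ) ≤ 1/2; norm_num), sigI_zero,
            hH0]
        · intro x
          simp only [ContinuousMap.coe_mk]
          rw [if_neg (show ¬ ((1:I):ℝ) ≤ 1/2 by show ¬ (1:ℝ) ≤ 1/2; norm_num), tauI_one,
            hF1]
        · rintro ⟨x, t⟩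
          simp only [ContinuousMap.coe_mk]
          by_cases ht : t.1 ≤ 1/2
          · rw [if_pos ht]
            by_cases hs1 : sigI t = 1
            · rw [hs1]
              intro hmem
              exact Set.eq_empty_iff_forall_notMem.mp (hdisj j) _ ⟨hρU x, hmem⟩
            · rcases hHmid ⟨x.1, hsub x.2⟩ (sigI t) hs1 with heq | ⟨i, hi⟩
              · rw [heq]
                intro hmem
                exact Set.eq_empty_iff_forall_notMem.mp (hdisj' j) _ ⟨x.2, hmem⟩
              · intro hmem
                have hdisj2 := oCell_disjoint_skeleton C (p := ⟨m + 1, i⟩) (r := k - 1)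
                  (by show k - 1 < m + 1; omega)
                exact Set.eq_empty_iff_forall_notMem.mp hdisj2 _ ⟨hi, hmem⟩
          · rw [if_neg ht]
            exact hFmem _

end CWProof
namespace CWProof
open unitInterval
set_option linter.unusedSectionVars false

variable {X : Type*} [TopologicalSpace X] [T2Space X] (C : CWStructure X)

lemma mem_skeleton_of_dimLE {n : ℕ} (hdim : C.DimLE n) (x : X) : x ∈ C.skeleton n := by
  have hx : x ∈ ⋃ p : Σ m, C.cell m,
      C.attach p.1 p.2 '' {y : CWDisk p.1 | ‖(y : EuclideanSpace ℝ (Fin p.1))‖ < 1} :=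
    C.cover ▸ Set.mem_univ x
  obtain ⟨p, hp⟩ := Set.mem_iUnion.mp hx
  have hple : p.1 ≤ n := by
    by_contra hgt
    exact (hdim p.1 (by omega)).elim p.2
  exact (mem_skeleton_iff C).mpr ⟨p, hple, hp⟩

end CWProof

/-- Let `X` be an `n`-dimensional CW-complex whose complement
`X − X^{(k−1)}` of the `(k−1)`-skeleton is path-connected. Then
`cat (X − X^{(k−1)}) ≤ n − k`. -/
theorem lscat_compl_skeleton_le {X : Type*} [TopologicalSpace X] [T2Space X]
    (C : CWStructure X) (n k : ℕ) (hk : 1 ≤ k) (hdim : C.DimLE n)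
    (hconn : PathConnectedSpace ↥((C.skeleton (k - 1))ᶜ)) :
    LSCat ↥((C.skeleton (k - 1))ᶜ) ≤ ((n - k : ℕ) : ℕ∞) := by
  open CWProof in
  obtain ⟨x₀⟩ := hconn.nonempty
  by_cases hkn : n < k
  · exfalso
    apply x₀.2
    exact skeleton_mono C (by omega) (mem_skeleton_of_dimLE C hdim x₀.1)
  · obtain ⟨U, hrel, hbound, hdisj, hcover, hhtp⟩ :=
      main_aux C k hk x₀.1 x₀.2 hconn n
    apply sInf_le
    refine ⟨n - k, rfl, fun i => Subtype.val ⁻¹' U (k + i), ?_, ?_, ?_⟩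
    · intro i
      show IsOpen (Subtype.val ⁻¹' U (k + (i : ℕ)))
      obtain ⟨V, hV, hUV⟩ := hrel (k + i)
      have huniv : C.skeleton n = Set.univ :=
        Set.eq_univ_of_forall (mem_skeleton_of_dimLE C hdim)
      rw [hUV, huniv, Set.inter_univ]
      exact hV.preimage continuous_subtype_val
    · apply Set.eq_univ_of_forall
      intro x
      have hx : x.1 ∈ C.skeleton n := mem_skeleton_of_dimLE C hdim x.1
      rcases hcover hx with hc | hc
      · exact absurd hc x.2
      obtain ⟨j, hj⟩ := Set.mem_iUnion.mp hc
      have hjb := hbound j ⟨x.1, hj⟩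
      refine Set.mem_iUnion.mpr ⟨⟨j - k, by omega⟩, ?_⟩
      show x.1 ∈ U (k + (j - k))
      have : k + (j - k) = j := by omega
      rw [this]
      exact hj
    · intro i
      obtain ⟨b, hb, F, hF0, hF1, hFmem⟩ := hhtp (k + i)
      refine ⟨⟨b, hb⟩, ⟨?_⟩⟩
      refine ⟨⟨fun z => ⟨F (⟨z.2.1.1, z.2.2⟩, z.1), hFmem _⟩, ?_⟩, ?_, ?_⟩
      · refine Continuous.subtype_mk ?_ _
        exact F.continuous.comp ((((continuous_subtype_val.comp
          continuous_subtype_val).comp continuous_snd).subtype_mk _).prodMk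
          continuous_fst)
      · intro x
        simp only [ContinuousMap.coe_mk]
        apply Subtype.ext
        exact hF0 _
      · intro x
        simp only [ContinuousMap.coe_mk]
        apply Subtype.ext
        exact hF1 _
end
end

section
/- For n ≥ 2, the integral cuplength of the ordered configuration space F(ℝ^n, k) equals k − 1. -/
open scoped ENat
open Set

noncomputable section

/-- The generators `A_{i,j}` (for `j < i`) of the cohomology ring of `F(ℝ^n,k)`. -/
def ConfGen (k : ℕ) : Type := {p : Fin k × Fin k // p.2 < p.1}

/-- The defining relations of the integral cohomology ring of `F(ℝ^n,k)` (`n ≥ 2`): the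
generators `A_{i,j}` live in degree `n−1`, square to zero, commute in the graded sense,
and satisfy the Arnold relation `A_{i,j}·A_{i,ℓ} = A_{ℓ,j}·(A_{i,ℓ} − A_{i,j})` for
`j < ℓ < i`. -/
inductive ConfRel (n k : ℕ) :
    FreeAlgebra ℤ (ConfGen k) → FreeAlgebra ℤ (ConfGen k) → Prop
  | sq (g : ConfGen k) :
      ConfRel n k (FreeAlgebra.ι ℤ g * FreeAlgebra.ι ℤ g) 0
  | comm (g h : ConfGen k) :
      ConfRel n k (FreeAlgebra.ι ℤ g * FreeAlgebra.ι ℤ h)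
        (((-1 : ℤ) ^ ((n - 1) * (n - 1))) • (FreeAlgebra.ι ℤ h * FreeAlgebra.ι ℤ g))
  | arnold (i l j : Fin k) (h1 : j < l) (h2 : l < i) :
      ConfRel n k
        (FreeAlgebra.ι ℤ ⟨(i, j), h1.trans h2⟩ * FreeAlgebra.ι ℤ ⟨(i, l), h2⟩)
        (FreeAlgebra.ι ℤ ⟨(l, j), h1⟩ *
          (FreeAlgebra.ι ℤ ⟨(i, l), h2⟩ - FreeAlgebra.ι ℤ ⟨(i, j), h1.trans h2⟩))

/-- The integral cohomology ring `H^*(F(ℝ^n,k); ℤ)`, presented by the generators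
`A_{i,j}` of degree `n−1` and the relations above. -/
abbrev ConfCohRing (n k : ℕ) : Type := RingQuot (ConfRel n k)

/-- The positive-degree part of `H^*(F(ℝ^n,k); ℤ)`: the span of all nonempty products of
the generators `A_{i,j}`. -/
def confCohPos (n k : ℕ) : Submodule ℤ (ConfCohRing n k) :=
  Submodule.span ℤ {x | ∃ l : List (ConfGen k), l ≠ [] ∧
    x = (l.map fun g => RingQuot.mkRingHom (ConfRel n k) (FreeAlgebra.ι ℤ g)).prod}

namespace ConfAux

set_option maxHeartbeats 1000000
set_option synthInstance.maxHeartbeats 400000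

variable (n k : ℕ)

/-- The image of a generator in the quotient ring. -/
def gen (g : ConfGen k) : ConfCohRing n k :=
  RingQuot.mkRingHom (ConfRel n k) (FreeAlgebra.ι ℤ g)

/-- Product of a word of generators. -/
def wprod (w : List (ConfGen k)) : ConfCohRing n k := (w.map (gen n k)).prod

/-- Sum of first indices of a word. -/
def wsum (w : List (ConfGen k)) : ℕ := (w.map fun g => (g.1.1 : ℕ)).sum

@[simp] lemma wprod_nil : wprod n k [] = 1 := rfl

@[simp] lemma wprod_cons (g : ConfGen k) (w : List (ConfGen k)) :
    wprod n k (g :: w) = gen n k g * wprod n k w := by simp [wprod]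

@[simp] lemma wprod_append (a b : List (ConfGen k)) :
    wprod n k (a ++ b) = wprod n k a * wprod n k b := by simp [wprod]

@[simp] lemma wsum_nil : wsum k [] = 0 := rfl

@[simp] lemma wsum_cons (g : ConfGen k) (w : List (ConfGen k)) :
    wsum k (g :: w) = (g.1.1 : ℕ) + wsum k w := by simp [wsum]

@[simp] lemma wsum_append (a b : List (ConfGen k)) :
    wsum k (a ++ b) = wsum k a + wsum k b := by simp [wsum]

lemma gen_sq (g : ConfGen k) : gen n k g * gen n k g = 0 := by
  have h := RingQuot.mkRingHom_rel (ConfRel.sq (n := n) g)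
  simpa [gen, map_mul] using h

lemma gen_comm (g h : ConfGen k) :
    gen n k g * gen n k h
      = ((-1 : ℤ) ^ ((n - 1) * (n - 1))) • (gen n k h * gen n k g) := by
  have h1 := RingQuot.mkRingHom_rel (ConfRel.comm (n := n) g h)
  rw [map_mul, zsmul_eq_mul, map_mul, map_mul, map_intCast, ← zsmul_eq_mul] at h1
  exact h1

lemma gen_arnold (i l j : Fin k) (h1 : j < l) (h2 : l < i) :
    gen n k ⟨(i, j), h1.trans h2⟩ * gen n k ⟨(i, l), h2⟩ =
      gen n k ⟨(l, j), h1⟩ * gen n k ⟨(i, l), h2⟩ -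
        gen n k ⟨(l, j), h1⟩ * gen n k ⟨(i, j), h1.trans h2⟩ := by
  have h' := RingQuot.mkRingHom_rel (ConfRel.arnold (n := n) i l j h1 h2)
  rw [map_mul, map_mul, map_sub, mul_sub] at h'
  exact h'

lemma wprod_move (g : ConfGen k) (l₁ l₂ : List (ConfGen k)) :
    wprod n k (l₁ ++ g :: l₂)
      = (((-1 : ℤ) ^ ((n - 1) * (n - 1))) ^ l₁.length) • wprod n k (g :: (l₁ ++ l₂)) := by
  induction l₁ with
  | nil => simp
  | cons a t ih =>
    have hsz : wprod n k ((a :: t) ++ g :: l₂) = gen n k a * wprod n k (t ++ g :: l₂) := by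
      simp
    rw [hsz, ih, mul_smul_comm, wprod_cons, ← mul_assoc, gen_comm n k a g, smul_mul_assoc,
      mul_assoc, ← wprod_cons, smul_smul, List.length_cons, pow_succ]
    have hw : wprod n k (g :: (a :: t ++ l₂)) = wprod n k (g :: a :: (t ++ l₂)) := rfl
    rw [hw]
    simp only [wprod_cons]

lemma pair_reduce (g h : ConfGen k) (hfi : g.1.1 = h.1.1) :
    ∃ L : List (ℤ × ConfGen k × ConfGen k),
      gen n k g * gen n k h
        = (L.map fun t => t.1 • (gen n k t.2.1 * gen n k t.2.2)).sum ∧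
      ∀ t ∈ L, (t.2.1.1.1 : ℕ) + (t.2.2.1.1 : ℕ) < (g.1.1 : ℕ) + (h.1.1 : ℕ) := by
  obtain ⟨⟨i, j⟩, hj⟩ := g
  obtain ⟨⟨i', l⟩, hl⟩ := h
  simp only at hfi
  subst hfi
  rcases lt_trichotomy j l with hc | hc | hc
  · refine ⟨[(1, ⟨(l, j), hc⟩, ⟨(i, l), hl⟩), (-1, ⟨(l, j), hc⟩, ⟨(i, j), hj⟩)], ?_, ?_⟩
    · have harn := gen_arnold n k i l j hc hl
      simp only [List.map_cons, List.map_nil, List.sum_cons, List.sum_nil, one_smul,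
        neg_smul, add_zero, ← sub_eq_add_neg]
      exact harn
    · intro t ht
      have h1 : (l : ℕ) < (i : ℕ) := hl
      have h2 : (j : ℕ) < (l : ℕ) := hc
      simp only [List.mem_cons, List.mem_singleton] at ht
      rcases ht with rfl | rfl | ht
      · exact show (l : ℕ) + (i : ℕ) < (i : ℕ) + (i : ℕ) by omega
      · exact show (l : ℕ) + (i : ℕ) < (i : ℕ) + (i : ℕ) by omega
      · exact absurd ht List.not_mem_nil
  · subst hc
    exact ⟨[], by simpa using gen_sq n k ⟨(i, j), hj⟩, by simp⟩
  · refine ⟨[(((-1 : ℤ) ^ ((n - 1) * (n - 1))), ⟨(j, l), hc⟩, ⟨(i, j), hj⟩),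
      (-((-1 : ℤ) ^ ((n - 1) * (n - 1))), ⟨(j, l), hc⟩, ⟨(i, l), hl⟩)], ?_, ?_⟩
    · have hcomm := gen_comm n k ⟨(i, j), hj⟩ ⟨(i, l), hl⟩
      have harn := gen_arnold n k i j l hc hj
      rw [hcomm, harn]
      simp only [List.map_cons, List.map_nil, List.sum_cons, List.sum_nil, neg_smul,
        add_zero, ← sub_eq_add_neg]
      exact smul_sub _ _ _
    · intro t ht
      have h1 : (j : ℕ) < (i : ℕ) := hj
      have h2 : (l : ℕ) < (j : ℕ) := hc
      simp only [List.mem_cons, List.mem_singleton] at ht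
      rcases ht with rfl | rfl | ht
      · exact show (j : ℕ) + (i : ℕ) < (i : ℕ) + (i : ℕ) by omega
      · exact show (j : ℕ) + (i : ℕ) < (i : ℕ) + (i : ℕ) by omega
      · exact absurd ht List.not_mem_nil

lemma exists_dup {α β : Type*} (f : α → β) :
    ∀ (w : List α), ¬ (w.map f).Nodup →
      ∃ (l₁ : List α) (g : α) (l₂ : List α) (h : α) (l₃ : List α),
        w = l₁ ++ ((g :: l₂) ++ (h :: l₃)) ∧ f g = f h := by
  intro w
  induction w with
  | nil => simp
  | cons a t ih =>
    intro hnd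
    rw [List.map_cons, List.nodup_cons] at hnd
    by_cases hmem : f a ∈ t.map f
    · obtain ⟨b, hb, hfb⟩ := List.mem_map.mp hmem
      obtain ⟨s, u, rfl⟩ := List.append_of_mem hb
      exact ⟨[], a, s, b, u, rfl, hfb.symm⟩
    · have hnd' : ¬ (t.map f).Nodup := by tauto
      obtain ⟨l₁, g, l₂, h, l₃, rfl, hf⟩ := ih hnd'
      exact ⟨a :: l₁, g, l₂, h, l₃, rfl, hf⟩

lemma not_nodup (hk : 1 ≤ k) (w : List (ConfGen k)) (hw : w.length = k) :
    ¬ (w.map fun g => g.1.1).Nodup := by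
  haveI : NeZero k := ⟨by omega⟩
  intro hnd
  have hlen : (w.map fun g => g.1.1).length = k := by simp [hw]
  have h1 : (w.map fun g => g.1.1).toFinset.card = k := by
    rw [List.toFinset_card_of_nodup hnd, hlen]
  have h2 : (w.map fun g => g.1.1).toFinset = Finset.univ :=
    Finset.eq_univ_of_card _ (by simp [h1])
  have h0 : (0 : Fin k) ∈ w.map fun g => g.1.1 := by
    rw [← List.mem_toFinset, h2]; exact Finset.mem_univ _
  obtain ⟨g, _, hg0⟩ := List.mem_map.mp h0
  have hlt : g.1.2 < (0 : Fin k) := hg0 ▸ g.2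
  have hlt' : (g.1.2 : ℕ) < ((0 : Fin k) : ℕ) := hlt
  simp at hlt'

lemma wprod_zero (hk : 1 ≤ k) :
    ∀ S (w : List (ConfGen k)), w.length = k → wsum k w ≤ S → wprod n k w = 0 := by
  intro S
  induction S with
  | zero =>
    intro w hw hs
    exfalso
    cases w with
    | nil => simp at hw; omega
    | cons g t =>
      have h1 : (g.1.2 : ℕ) < (g.1.1 : ℕ) := g.2
      have h2 : wsum k (g :: t) = (g.1.1 : ℕ) + wsum k t := wsum_cons k g t
      omega
  | succ S ih =>
    intro w hw hs
    obtain ⟨l₁, g, l₂, h, l₃, rfl, hfi⟩ :=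
      exists_dup (fun g : ConfGen k => g.1.1) w (not_nodup k hk w hw)
    obtain ⟨L, hL, hlt⟩ := pair_reduce n k g h hfi
    have hfig : (g.1.1 : ℕ) = (h.1.1 : ℕ) := by rw [hfi]
    have key : wprod n k (l₁ ++ ((g :: l₂) ++ (h :: l₃)))
        = (((-1 : ℤ) ^ ((n - 1) * (n - 1))) ^ l₂.length) •
            (wprod n k l₁ * ((gen n k g * gen n k h) * wprod n k (l₂ ++ l₃))) := by
      have hw2 : l₁ ++ ((g :: l₂) ++ (h :: l₃)) = l₁ ++ (g :: (l₂ ++ h :: l₃)) := by simp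
      rw [hw2, wprod_append, wprod_cons, wprod_move n k h l₂ l₃, wprod_cons,
        mul_smul_comm, mul_smul_comm]
      congr 1
      rw [mul_assoc]
    rw [key, hL, ← List.sum_map_mul_right, ← List.sum_map_mul_left]
    have hsum0 : (L.map fun t => wprod n k l₁ *
        ((t.1 • (gen n k t.2.1 * gen n k t.2.2)) * wprod n k (l₂ ++ l₃))).sum = 0 := by
      refine List.sum_eq_zero ?_
      intro x hx
      obtain ⟨t, ht, rfl⟩ := List.mem_map.mp hx
      have heq : wprod n k l₁ *
          ((t.1 • (gen n k t.2.1 * gen n k t.2.2)) * wprod n k (l₂ ++ l₃))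
          = t.1 • wprod n k (l₁ ++ (t.2.1 :: t.2.2 :: (l₂ ++ l₃))) := by
        rw [smul_mul_assoc, mul_smul_comm]
        congr 1
        simp [mul_assoc]
      have hlen : (l₁ ++ (t.2.1 :: t.2.2 :: (l₂ ++ l₃))).length = k := by
        simp only [List.length_append, List.length_cons] at hw ⊢
        omega
      have hsum : wsum k (l₁ ++ (t.2.1 :: t.2.2 :: (l₂ ++ l₃))) ≤ S := by
        have h3 := hlt t ht
        simp only [wsum_append, wsum_cons] at hs ⊢
        omega
      rw [heq, ih _ hlen hsum]; exact smul_zero _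
    rw [hsum0]; exact smul_zero _

/-- Words of length at least `m`. -/
def longSet (m : ℕ) : Set (ConfCohRing n k) :=
  {x | ∃ w : List (ConfGen k), m ≤ w.length ∧ x = wprod n k w}

lemma prod_mem_span :
    ∀ (m : ℕ) (f : Fin m → ConfCohRing n k), (∀ i, f i ∈ confCohPos n k) →
      (List.ofFn f).prod ∈ Submodule.span ℤ (longSet n k m) := by
  intro m
  induction m with
  | zero =>
    intro f _
    rw [List.ofFn_zero, List.prod_nil]
    exact Submodule.subset_span ⟨[], by simp, by simp⟩
  | succ m ih =>
    intro f hf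
    rw [List.ofFn_succ, List.prod_cons]
    have h0 : f 0 ∈ Submodule.span ℤ (longSet n k 1) := by
      refine Submodule.span_mono ?_ (hf 0)
      rintro x ⟨l, hl, rfl⟩
      exact ⟨l, by cases l with | nil => simp at hl | cons a t => simp, rfl⟩
    have h1 := ih (fun i => f i.succ) (fun i => hf i.succ)
    have h2 := Submodule.mul_mem_mul h0 h1
    erw [Submodule.span_mul_span] at h2
    refine Submodule.span_mono ?_ h2
    rintro x hx
    rw [Set.mem_mul] at hx
    obtain ⟨a, ⟨w₁, hw₁, rfl⟩, b, ⟨w₂, hw₂, rfl⟩, rfl⟩ := hx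
    exact ⟨w₁ ++ w₂, by simp only [List.length_append]; omega,
      (wprod_append n k w₁ w₂).symm⟩

lemma part1 (hk : 1 ≤ k) (f : Fin k → ConfCohRing n k)
    (hf : ∀ i, f i ∈ confCohPos n k) : (List.ofFn f).prod = 0 := by
  have h1 := prod_mem_span n k k f hf
  have h2 : longSet n k k ⊆ {0} := by
    rintro x ⟨w, hw, rfl⟩
    have hsplit : w = w.take k ++ w.drop k := (List.take_append_drop k w).symm
    rw [hsplit, wprod_append,
      wprod_zero n k hk (wsum k (w.take k)) (w.take k)
        (by rw [List.length_take]; omega) le_rfl, zero_mul]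
    rfl
  have h3 : Submodule.span ℤ (longSet n k k) ≤ ⊥ := by
    rw [← Submodule.span_zero_singleton ℤ]
    exact Submodule.span_mono h2
  simpa using h3 h1

/-! ### Part 2: a nonzero product of `k - 1` classes -/

/-- Exterior algebra over `ZMod 2` used as the target of a representation. -/
abbrev ExtTarget (k : ℕ) : Type := ExteriorAlgebra (ZMod 2) (Fin (k - 1) → ZMod 2)

def vgen (g : ConfGen k) : Fin (k - 1) → ZMod 2 :=
  Pi.single ⟨(g.1.1 : ℕ) - 1, by
    have h1 : (g.1.2 : ℕ) < (g.1.1 : ℕ) := g.2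
    have h2 := g.1.1.isLt
    omega⟩ 1

def Fhom : FreeAlgebra ℤ (ConfGen k) →ₐ[ℤ] ExtTarget k :=
  FreeAlgebra.lift ℤ fun g => ExteriorAlgebra.ι (ZMod 2) (vgen k g)

lemma neg_one_eq : (-1 : ExtTarget k) = 1 := by
  have h : ((-1 : ZMod 2)) = 1 := by decide
  calc (-1 : ExtTarget k) = algebraMap (ZMod 2) (ExtTarget k) (-1) := by
        rw [map_neg, map_one]
    _ = algebraMap (ZMod 2) (ExtTarget k) 1 := by rw [h]
    _ = 1 := map_one _

lemma Fhom_rel : ∀ ⦃x y⦄, ConfRel n k x y → Fhom k x = Fhom k y := by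
  intro x y hr
  induction hr with
  | sq g =>
    simp [Fhom, map_mul, FreeAlgebra.lift_ι_apply, ExteriorAlgebra.ι_sq_zero]
  | comm g h =>
    rw [map_mul, map_smul, map_mul]
    simp only [Fhom, FreeAlgebra.lift_ι_apply]
    have hsw : ExteriorAlgebra.ι (ZMod 2) (vgen k g) * ExteriorAlgebra.ι (ZMod 2) (vgen k h)
        = -(ExteriorAlgebra.ι (ZMod 2) (vgen k h) * ExteriorAlgebra.ι (ZMod 2) (vgen k g)) :=
      eq_neg_of_add_eq_zero_left (ExteriorAlgebra.ι_add_mul_swap _ _)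
    rw [hsw, zsmul_eq_mul]
    push_cast
    rw [neg_one_eq, one_pow, one_mul, ← neg_one_mul, neg_one_eq, one_mul]
  | arnold i l j h1 h2 =>
    rw [map_mul, map_mul, map_sub]
    simp only [Fhom]
    erw [FreeAlgebra.lift_ι_apply, FreeAlgebra.lift_ι_apply, FreeAlgebra.lift_ι_apply]
    have hv : vgen k (⟨(i, j), h1.trans h2⟩ : ConfGen k) = vgen k ⟨(i, l), h2⟩ := rfl
    erw [hv, sub_self, mul_zero, ExteriorAlgebra.ι_sq_zero]

def Phi : ConfCohRing n k →ₐ[ℤ] ExtTarget k :=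
  RingQuot.liftAlgHom ℤ ⟨Fhom k, Fhom_rel n k⟩

lemma Phi_gen (g : ConfGen k) :
    Phi n k (gen n k g) = ExteriorAlgebra.ι (ZMod 2) (vgen k g) := by
  have h1 : gen n k g = RingQuot.mkAlgHom ℤ (ConfRel n k) (FreeAlgebra.ι ℤ g) := by
    rw [gen, ← RingQuot.mkAlgHom_coe ℤ]
    rfl
  rw [h1, Phi, RingQuot.liftAlgHom_mkAlgHom_apply, Fhom, FreeAlgebra.lift_ι_apply]

/-- The generators `A_{i+1,0}`. -/
def genr (hk : 1 ≤ k) (i : Fin (k - 1)) : ConfGen k :=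
  ⟨(⟨i.1 + 1, by have := i.isLt; omega⟩, ⟨0, by omega⟩), by
    simp [Fin.lt_def]⟩

lemma vgen_genr (hk : 1 ≤ k) (i : Fin (k - 1)) :
    vgen k (genr k hk i) = Pi.single i (1 : ZMod 2) := rfl

lemma part2 (hk : 1 ≤ k) :
    ∃ f : Fin (k - 1) → ConfCohRing n k,
      (∀ i, f i ∈ confCohPos n k) ∧ (List.ofFn f).prod ≠ 0 := by
  refine ⟨fun i => gen n k (genr k hk i), fun i => ?_, ?_⟩
  · exact Submodule.subset_span ⟨[genr k hk i], by simp, by simp [gen]⟩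
  · intro h0
    have himg := congrArg (Phi n k) h0
    rw [map_zero, map_list_prod, List.map_ofFn] at himg
    have hcomp : (⇑(Phi n k) ∘ fun i => gen n k (genr k hk i))
        = fun i : Fin (k - 1) => ExteriorAlgebra.ι (ZMod 2) (Pi.single i (1 : ZMod 2)) := by
      funext i
      rw [Function.comp_apply, Phi_gen, vgen_genr]
    rw [hcomp, ← ExteriorAlgebra.ιMulti_apply] at himg
    set b := Pi.basisFun (ZMod 2) (Fin (k - 1)) with hb
    set ff : ∀ i : ℕ, (Fin (k - 1) → ZMod 2) [⋀^Fin i]→ₗ[ZMod 2] ZMod 2 :=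
      Function.update (fun _ => 0) (k - 1) b.det with hff
    have hev := congrArg (ExteriorAlgebra.liftAlternating ff) himg
    rw [map_zero, ExteriorAlgebra.liftAlternating_apply_ιMulti, hff,
      Function.update_self] at hev
    have hbs : (fun i : Fin (k - 1) => Pi.single i (1 : ZMod 2)) = ⇑b := by
      funext i
      rw [hb, Pi.basisFun_apply]
    rw [hbs, b.det_self] at hev
    exact one_ne_zero hev

end ConfAux


/-- For `n ≥ 2`, the integral cuplength of the ordered configuration
space `F(ℝ^n, k)` equals `k − 1`: in its integral cohomology ring (presented as above),
every product of `k` positive-degree classes vanishes, while some product of `k − 1`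
positive-degree classes is nonzero. -/
theorem cuplength_confCohRing (n k : ℕ) (hn : 2 ≤ n) (hk : 1 ≤ k) :
    (∀ f : Fin k → ConfCohRing n k, (∀ i, f i ∈ confCohPos n k) →
      (List.ofFn f).prod = 0) ∧
    (∃ f : Fin (k - 1) → ConfCohRing n k, (∀ i, f i ∈ confCohPos n k) ∧
      (List.ofFn f).prod ≠ 0) := by
  exact ⟨ConfAux.part1 n k hk, ConfAux.part2 n k hk⟩
end
end

section
/- For all n and k, the LS-category of the unordered configuration space satisfies cat(B(ℝ^n, k)) ≤ (k−1)·(n−1). -/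
open scoped ENat
open Set

noncomputable section

/-- The ordered configuration space `F(ℝ^n, k)` of `k` distinct points in `ℝ^n`. -/
abbrev Conf (n k : ℕ) : Type :=
  {x : Fin k → EuclideanSpace ℝ (Fin n) // Function.Injective x}

/-- Two ordered configurations are equivalent iff they differ by a permutation of the labels. -/
def confSetoid (n k : ℕ) : Setoid (Conf n k) where
  r x y := ∃ σ : Equiv.Perm (Fin k), x.1 ∘ σ = y.1
  iseqv := by
    refine ⟨fun x => ⟨Equiv.refl _, rfl⟩, ?_, ?_⟩
    · rintro x y ⟨σ, h⟩
      refine ⟨σ.symm, funext fun i => ?_⟩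
      have := congrFun h (σ.symm i)
      simpa using this.symm
    · rintro x y z ⟨σ, h⟩ ⟨τ, h'⟩
      refine ⟨τ.trans σ, funext fun i => ?_⟩
      have h1 := congrFun h (τ i)
      have h2 := congrFun h' i
      simpa [Equiv.trans] using h1.trans h2

/-- The unordered configuration space `B(ℝ^n, k) = F(ℝ^n, k)/Σ_k`. -/
abbrev UConf (n k : ℕ) : Type := Quotient (confSetoid n k)

/-- The covering projection `π^n_k : F(ℝ^n,k) → B(ℝ^n,k)`. -/
def uproj (n k : ℕ) : C(Conf n k, UConf n k) :=
  ⟨Quotient.mk (confSetoid n k), continuous_quotient_mk'⟩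

/-- Extension `ℝ^n ≅ ℝ^n × {0} ⊂ ℝ^{n+r}` by zero in the last `r` coordinates. -/
def extMap (n r : ℕ) (x : EuclideanSpace ℝ (Fin n)) : EuclideanSpace ℝ (Fin (n + r)) :=
  WithLp.toLp 2 (fun j : Fin (n + r) => if h : (j : ℕ) < n then x ⟨j, h⟩ else 0)

lemma extMap_injective (n r : ℕ) : Function.Injective (extMap n r) := by
  intro x y h
  ext i
  have := congrArg (fun v : EuclideanSpace ℝ (Fin (n + r)) => v (Fin.castAdd r i)) h
  simpa [extMap, i.isLt] using this

lemma extMap_continuous (n r : ℕ) : Continuous (extMap n r) := by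
  unfold extMap
  apply (PiLp.continuous_toLp 2 _).comp
  apply continuous_pi
  intro j
  by_cases h : (j : ℕ) < n
  · simp only [h, dite_true]
    exact (continuous_apply (⟨(j : ℕ), h⟩ : Fin n)).comp (PiLp.continuous_ofLp 2 _)
  · simpa [h] using (continuous_const : Continuous fun _ : EuclideanSpace ℝ (Fin n) => (0 : ℝ))

/-- The inclusion `F(ℝ^n,k) ↪ F(ℝ^{n+r},k)` induced by `ℝ^n ≅ ℝ^n × {0} ⊂ ℝ^{n+r}`. -/
def confIncl (n r k : ℕ) : C(Conf n k, Conf (n + r) k) where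
  toFun x := ⟨fun i => extMap n r (x.1 i), (extMap_injective n r).comp x.2⟩
  continuous_toFun := by
    apply Continuous.subtype_mk
    exact continuous_pi fun i =>
      (extMap_continuous n r).comp ((continuous_apply i).comp continuous_subtype_val)

/-- The induced inclusion `B(ℝ^n,k) ↪ B(ℝ^{n+r},k)` on unordered configuration spaces. -/
def uconfIncl (n r k : ℕ) : C(UConf n k, UConf (n + r) k) where
  toFun := Quotient.map (confIncl n r k) (by
    rintro x y ⟨σ, h⟩
    exact ⟨σ, funext fun i => by
      simp only [Function.comp_apply, confIncl, ContinuousMap.coe_mk]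
      exact congrArg (extMap n r) (congrFun h i)⟩)
  continuous_toFun := Continuous.quotient_map' (confIncl n r k).continuous _
namespace LSCHelp
open Topology

structure Cert (n k : ℕ) where
  d : Fin k → Fin k → ℕ
  symm : ∀ a b, d a b = d b a
  one_le : ∀ a b, 1 ≤ d a b
  le_n : ∀ a b, a ≠ b → d a b ≤ n
  diag : ∀ a, d a a = n + 1
  ultra : ∀ a b c, min (d a b) (d b c) ≤ d a c

variable {n k : ℕ}

abbrev E (n : ℕ) := EuclideanSpace ℝ (Fin n)

lemma Cert.le_n1 (C : Cert n k) (a b : Fin k) : C.d a b ≤ n + 1 := by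
  by_cases h : a = b
  · subst h; rw [C.diag]
  · exact (C.le_n a b h).trans (Nat.le_succ n)

/-- The setoid "same block after coordinate level `j`". -/
def csetoid (C : Cert n k) (j : ℕ) : Setoid (Fin k) where
  r a b := a = b ∨ j < C.d a b
  iseqv := by
    refine ⟨fun a => Or.inl rfl, ?_, ?_⟩
    · rintro a b (rfl | h)
      · exact Or.inl rfl
      · exact Or.inr (C.symm b a ▸ h)
    · rintro a b c (rfl | h1) h2
      · exact h2
      · rcases h2 with rfl | h2
        · exact Or.inr h1
        · by_cases hac : a = c
          · exact Or.inl hac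
          · exact Or.inr (lt_of_lt_of_le (lt_min h1 h2) (C.ultra a b c))

def nclasses (C : Cert n k) (j : ℕ) : ℕ := Nat.card (Quotient (csetoid C j))

def weight (C : Cert n k) : ℕ := ∑ j ∈ Finset.Ico 1 n, (k - nclasses C j)

lemma nclasses_le (C : Cert n k) (j : ℕ) : nclasses C j ≤ k := by
  have h : Function.Surjective (Quotient.mk (csetoid C j)) := Quotient.mk_surjective
  simpa [nclasses] using Nat.card_le_card_of_surjective _ h

lemma one_le_nclasses (hk : 1 ≤ k) (C : Cert n k) (j : ℕ) : 1 ≤ nclasses C j := by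
  have h1 : Nonempty (Quotient (csetoid C j)) := ⟨⟦⟨0, hk⟩⟧⟩
  exact Nat.card_pos

lemma weight_le (hk : 1 ≤ k) (C : Cert n k) : weight C ≤ (k - 1) * (n - 1) := by
  calc weight C ≤ ∑ _j ∈ Finset.Ico 1 n, (k - 1) := by
        refine Finset.sum_le_sum fun j _ => ?_
        have := one_le_nclasses hk C j
        omega
    _ = (n - 1) * (k - 1) := by rw [Finset.sum_const, Nat.card_Ico, smul_eq_mul]
    _ = (k - 1) * (n - 1) := Nat.mul_comm _ _



/-- Validity of a certificate at a labeled configuration: split coordinates really split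
(with the recorded pairs having nonzero gaps), and every "noise" gap (a pair at a coordinate
strictly before its splitting level) is smaller than every "scale" gap (a pair at its
splitting coordinate). -/
def Valid (x : Fin k → E n) (C : Cert n k) : Prop :=
  (∀ a b (i : Fin n), C.d a b = (i : ℕ) + 1 → x a i ≠ x b i) ∧
  (∀ a b c e (i j : Fin n), C.d a b = (i : ℕ) + 1 → (j : ℕ) + 1 < C.d c e →
    |x c j - x e j| < |x a i - x b i|)

lemma ne_of_dsplit (C : Cert n k) {a b : Fin k} {i : Fin n} (h : C.d a b = (i : ℕ) + 1) :
    a ≠ b := by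
  rintro rfl
  rw [C.diag] at h
  omega

/-- The order induced by a certificate. -/
def COrd (x : Fin k → E n) (C : Cert n k) (a b : Fin k) : Prop :=
  ∃ i : Fin n, C.d a b = (i : ℕ) + 1 ∧ x a i < x b i

lemma cord_irrefl (x : Fin k → E n) (C : Cert n k) (a : Fin k) : ¬ COrd x C a a := by
  rintro ⟨i, hd, -⟩
  exact absurd hd (by rw [C.diag]; omega)

/-- The splitting index of a distinct pair. -/
def dIdx (C : Cert n k) (a b : Fin k) (hab : a ≠ b) : Fin n :=
  ⟨C.d a b - 1, by have h1 := C.one_le a b; have h2 := C.le_n a b hab; omega⟩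

lemma dIdx_spec (C : Cert n k) (a b : Fin k) (hab : a ≠ b) :
    C.d a b = ((dIdx C a b hab : ℕ)) + 1 := by
  have h1 := C.one_le a b
  simp [dIdx]
  omega

lemma cord_total {x : Fin k → E n} {C : Cert n k} (hv : Valid x C) {a b : Fin k} (hab : a ≠ b) :
    COrd x C a b ∨ COrd x C b a := by
  set i := dIdx C a b hab
  have hd : C.d a b = (i : ℕ) + 1 := dIdx_spec C a b hab
  have hd' : C.d b a = (i : ℕ) + 1 := (C.symm b a).trans hd
  rcases lt_or_gt_of_ne (hv.1 a b i hd) with h | h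
  · exact Or.inl ⟨i, hd, h⟩
  · exact Or.inr ⟨i, hd', h⟩

lemma cord_asymm {x : Fin k → E n} {C : Cert n k} {a b : Fin k}
    (h : COrd x C a b) : ¬ COrd x C b a := by
  rintro ⟨i, hd, hlt⟩
  rcases h with ⟨i', hd', hlt'⟩
  have : (i : ℕ) = (i' : ℕ) := by rw [C.symm b a] at hd; omega
  have : i = i' := Fin.ext this
  subst this
  exact absurd hlt (not_lt.2 hlt'.le)

lemma cord_trans {x : Fin k → E n} {C : Cert n k} (hv : Valid x C) {a b c : Fin k}
    (h1 : COrd x C a b) (h2 : COrd x C b c) : COrd x C a c := by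
  obtain ⟨i, hdi, hxi⟩ := h1
  obtain ⟨j, hdj, hxj⟩ := h2
  have hab : a ≠ b := ne_of_dsplit C hdi
  have hbc : b ≠ c := ne_of_dsplit C hdj
  have hac : a ≠ c := by
    rintro rfl
    exact cord_asymm ⟨i, hdi, hxi⟩ ⟨j, hdj, hxj⟩
  have hultra1 := C.ultra a b c
  rcases lt_trichotomy (i : ℕ) (j : ℕ) with h | h | h
  · -- split of (a,b) comes first
    have hnoise : |x b i - x c i| < |x a i - x b i| :=
      hv.2 a b b c i i hdi (by omega)
    have hdac : C.d a c = (i : ℕ) + 1 := by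
      have hge : (i : ℕ) + 1 ≤ C.d a c := le_trans (by rw [hdi, hdj]; omega) hultra1
      by_contra hne
      have hlt2 : (i : ℕ) + 1 < C.d a c := by omega
      have := C.ultra a c b
      rw [hdi, C.symm c b, hdj] at this
      omega
    refine ⟨i, hdac, ?_⟩
    have := abs_lt.1 hnoise
    have habs : |x a i - x b i| = x b i - x a i := by rw [abs_sub_comm]; exact abs_of_pos (by linarith)
    rw [habs] at this
    linarith [this.1]
  · -- equal splitting coordinates
    have hij : i = j := Fin.ext h
    subst hij
    have hdac : C.d a c = (i : ℕ) + 1 := by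
      have hge : (i : ℕ) + 1 ≤ C.d a c := le_trans (by rw [hdi, hdj]; omega) hultra1
      by_contra hne
      have hlt2 : (i : ℕ) + 1 < C.d a c := by omega
      have hnoise : |x a i - x c i| < |x a i - x b i| := hv.2 a b a c i i hdi hlt2
      have := abs_lt.1 hnoise
      have habs : |x a i - x b i| = x b i - x a i := by rw [abs_sub_comm]; exact abs_of_pos (by linarith)
      rw [habs] at this
      linarith [this.1, this.2]
    exact ⟨i, hdac, lt_trans hxi hxj⟩
  · -- split of (b,c) comes first
    have hnoise : |x a j - x b j| < |x b j - x c j| :=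
      hv.2 b c a b j j hdj (by omega)
    have hdac : C.d a c = (j : ℕ) + 1 := by
      have hge : (j : ℕ) + 1 ≤ C.d a c := le_trans (by rw [hdi, hdj]; omega) hultra1
      by_contra hne
      have hlt2 : (j : ℕ) + 1 < C.d a c := by omega
      have := C.ultra b a c
      rw [C.symm b a, hdi, hdj] at this
      omega
    refine ⟨j, hdac, ?_⟩
    have := abs_lt.1 hnoise
    have habs : |x b j - x c j| = x c j - x b j := by rw [abs_sub_comm]; exact abs_of_pos (by linarith)
    rw [habs] at this
    linarith [this.2]

/-- The rank of a label under the certificate order. -/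
def rkF (x : Fin k → E n) (C : Cert n k) (a : Fin k) : ℕ :=
  {b | COrd x C b a}.ncard

lemma rkF_lt {x : Fin k → E n} {C : Cert n k} (hv : Valid x C) {a b : Fin k}
    (h : COrd x C a b) : rkF x C a < rkF x C b := by
  apply Set.ncard_lt_ncard
  · constructor
    · intro c hc
      exact cord_trans hv hc h
    · intro hsub
      exact cord_irrefl x C a (hsub h)
  · exact Set.toFinite _

lemma rkF_lt_k {x : Fin k → E n} {C : Cert n k} (a : Fin k) : rkF x C a < k := by
  have h1 : {b | COrd x C b a} ⊂ Set.univ := by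
    refine ⟨Set.subset_univ _, fun hsub => ?_⟩
    exact cord_irrefl x C a (hsub (Set.mem_univ a))
  have := Set.ncard_lt_ncard h1 (Set.toFinite _)
  rwa [Set.ncard_univ, Nat.card_eq_fintype_card, Fintype.card_fin] at this

lemma rkF_injective {x : Fin k → E n} {C : Cert n k} (hv : Valid x C) :
    Function.Injective (rkF x C) := by
  intro a b hab
  by_contra hne
  rcases cord_total hv hne with h | h
  · exact absurd hab (Nat.ne_of_lt (rkF_lt hv h))
  · exact absurd hab.symm (Nat.ne_of_lt (rkF_lt hv h))


/-! ### Rigidity -/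

lemma d_le_total {x : Fin k → E n} {C C' : Cert n k} (hC : Valid x C) (hC' : Valid x C') :
    (∀ a b, C.d a b ≤ C'.d a b) ∨ (∀ a b, C'.d a b ≤ C.d a b) := by
  by_contra hcon
  push_neg at hcon
  obtain ⟨⟨a, b, h1⟩, ⟨c, e, h2⟩⟩ := hcon
  -- h1 : C'.d a b < C.d a b, h2 : C.d c e < C'.d c e
  have hab : a ≠ b := by
    rintro rfl
    rw [C.diag, C'.diag] at h1
    omega
  have hce : c ≠ e := by
    rintro rfl
    rw [C.diag, C'.diag] at h2
    omega
  set i := dIdx C c e hce with hi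
  have hdi : C.d c e = (i : ℕ) + 1 := dIdx_spec C c e hce
  set i' := dIdx C' a b hab with hi'
  have hdi' : C'.d a b = (i' : ℕ) + 1 := dIdx_spec C' a b hab
  have hn1 : |x c i - x e i| < |x a i' - x b i'| :=
    hC'.2 a b c e i' i hdi' (by omega)
  have hn2 : |x a i' - x b i'| < |x c i - x e i| :=
    hC.2 c e a b i i' hdi (by omega)
  linarith

lemma csetoid_mono {C C' : Cert n k} (h : ∀ a b, C.d a b ≤ C'.d a b) (j : ℕ) :
    ∀ a b : Fin k, (csetoid C j).r a b → (csetoid C' j).r a b := by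
  rintro a b (rfl | hj)
  · exact Or.inl rfl
  · exact Or.inr (lt_of_lt_of_le hj (h a b))

lemma nclasses_mono {C C' : Cert n k} (h : ∀ a b, C.d a b ≤ C'.d a b) (j : ℕ) :
    nclasses C' j ≤ nclasses C j := by
  have hsurj : Function.Surjective
      (Quotient.map' (id : Fin k → Fin k) (csetoid_mono h j) :
        Quotient (csetoid C j) → Quotient (csetoid C' j)) := by
    intro q
    obtain ⟨a, rfl⟩ := Quotient.mk''_surjective q
    exact ⟨Quotient.mk'' a, rfl⟩
  exact Nat.card_le_card_of_surjective _ hsurj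

lemma csetoid_eq_of_card {C C' : Cert n k} (h : ∀ a b, C.d a b ≤ C'.d a b) (j : ℕ)
    (hcard : nclasses C j = nclasses C' j) :
    ∀ a b : Fin k, (csetoid C' j).r a b → (csetoid C j).r a b := by
  intro a b hab
  set f := (Quotient.map' (id : Fin k → Fin k) (csetoid_mono h j) :
        Quotient (csetoid C j) → Quotient (csetoid C' j)) with hf
  have hsurj : Function.Surjective f := by
    intro q
    obtain ⟨c, rfl⟩ := Quotient.mk''_surjective q
    exact ⟨Quotient.mk'' c, rfl⟩
  have hbij : Function.Bijective f := by
    rw [Nat.bijective_iff_surjective_and_card]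
    exact ⟨hsurj, hcard⟩
  have : f (Quotient.mk'' a) = f (Quotient.mk'' b) := Quotient.sound' hab
  have := hbij.1 this
  exact Quotient.exact' this

lemma d_eq_of_le_of_weight {C C' : Cert n k}
    (hle : ∀ a b, C.d a b ≤ C'.d a b) (hw : weight C = weight C') :
    ∀ a b, C.d a b = C'.d a b := by
  have hterm : ∀ j ∈ Finset.Ico 1 n, k - nclasses C j ≤ k - nclasses C' j := fun j _ =>
    Nat.sub_le_sub_left (nclasses_mono hle j) k
  have hsum := (Finset.sum_eq_sum_iff_of_le hterm).1 hw
  have hncl : ∀ j ∈ Finset.Ico 1 n, nclasses C j = nclasses C' j := by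
    intro j hj
    have h1 := hsum j hj
    have h2 := nclasses_le C j
    have h3 := nclasses_le C' j
    have h4 := nclasses_mono hle j
    omega
  intro a b
  by_cases hab : a = b
  · subst hab; rw [C.diag, C'.diag]
  · by_contra hne
    have hlt : C.d a b < C'.d a b := lt_of_le_of_ne (hle a b) hne
    set j := C.d a b with hj
    have hjmem : j ∈ Finset.Ico 1 n := by
      refine Finset.mem_Ico.2 ⟨C.one_le a b, ?_⟩
      have := C'.le_n a b hab
      omega
    have := csetoid_eq_of_card hle j (hncl j hjmem) a b (Or.inr hlt)
    rcases this with rfl | hcon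
    · exact hab rfl
    · omega

/-- **Rigidity**: two valid certificates of equal weight induce the same order. -/
lemma cord_eq_of_weight {x : Fin k → E n} {C C' : Cert n k} (hC : Valid x C)
    (hC' : Valid x C') (hw : weight C = weight C') : COrd x C = COrd x C' := by
  have hd : ∀ a b, C.d a b = C'.d a b := by
    rcases d_le_total hC hC' with h | h
    · exact d_eq_of_le_of_weight h hw
    · intro a b
      exact (d_eq_of_le_of_weight h hw.symm a b).symm
  funext a b
  simp only [COrd, hd]


/-! ### The exact certificate -/

lemma fd_nonempty {x : Fin k → E n} (hx : Function.Injective x) {a b : Fin k} (h : a ≠ b) :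
    (Finset.univ.filter (fun i : Fin n => x a i ≠ x b i)).Nonempty := by
  obtain ⟨i, hi⟩ : ∃ i, x a i ≠ x b i := by
    by_contra hc; push_neg at hc; exact h (hx (PiLp.ext hc))
  exact ⟨i, Finset.mem_filter.2 ⟨Finset.mem_univ i, hi⟩⟩

/-- First coordinate where two distinct points differ. -/
def fd (x : Fin k → E n) (hx : Function.Injective x) (a b : Fin k) (h : a ≠ b) : Fin n :=
  (Finset.univ.filter (fun i : Fin n => x a i ≠ x b i)).min' (fd_nonempty hx h)

lemma fd_mem {x : Fin k → E n} (hx : Function.Injective x) {a b : Fin k} (h : a ≠ b) :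
    x a (fd x hx a b h) ≠ x b (fd x hx a b h) := by
  have := Finset.min'_mem _ (fd_nonempty hx h)
  exact (Finset.mem_filter.1 this).2

lemma fd_min {x : Fin k → E n} (hx : Function.Injective x) {a b : Fin k} (h : a ≠ b)
    (j : Fin n) (hj : (j : ℕ) < (fd x hx a b h : ℕ)) : x a j = x b j := by
  by_contra hne
  have hmem : j ∈ Finset.univ.filter (fun i : Fin n => x a i ≠ x b i) :=
    Finset.mem_filter.2 ⟨Finset.mem_univ j, hne⟩
  have h2 : (fd x hx a b h : ℕ) ≤ (j : ℕ) := Finset.min'_le _ j hmem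
  omega

lemma fd_symm {x : Fin k → E n} (hx : Function.Injective x) {a b : Fin k} (h : a ≠ b) :
    fd x hx a b h = fd x hx b a h.symm := by
  unfold fd
  congr 1
  ext i
  simp [ne_comm]

/-- Split level function of the exact certificate. -/
def dEx (x : Fin k → E n) (hx : Function.Injective x) (a b : Fin k) : ℕ :=
  if h : a = b then n + 1 else (fd x hx a b h : ℕ) + 1

lemma dEx_eq {x : Fin k → E n} (hx : Function.Injective x) {a b : Fin k} (h : a ≠ b) :
    dEx x hx a b = (fd x hx a b h : ℕ) + 1 := dif_neg h

lemma dEx_diag {x : Fin k → E n} (hx : Function.Injective x) (a : Fin k) :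
    dEx x hx a a = n + 1 := dif_pos rfl

lemma dEx_le {x : Fin k → E n} (hx : Function.Injective x) (a b : Fin k) :
    dEx x hx a b ≤ n + 1 := by
  by_cases h : a = b
  · subst h; rw [dEx_diag]
  · rw [dEx_eq hx h]
    have := (fd x hx a b h).isLt
    omega

/-- The exact certificate: split each pair at the first coordinate where it differs. -/
def exactCert (x : Fin k → E n) (hx : Function.Injective x) : Cert n k where
  d := dEx x hx
  symm a b := by
    by_cases h : a = b
    · subst h; rfl
    · rw [dEx_eq hx h, dEx_eq hx (Ne.symm h), fd_symm hx h]
  one_le a b := by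
    by_cases h : a = b
    · subst h; rw [dEx_diag]; omega
    · rw [dEx_eq hx h]; omega
  le_n a b h := by
    rw [dEx_eq hx h]
    have := (fd x hx a b h).isLt
    omega
  diag a := dEx_diag hx a
  ultra a b c := by
    by_cases hab : a = b
    · subst hab
      rw [dEx_diag, min_comm]
      exact min_le_left _ _
    · by_cases hbc : b = c
      · subst hbc
        exact min_le_left _ _
      · by_cases hac : a = c
        · subst hac
          rw [dEx_diag]
          exact (min_le_left _ _).trans (dEx_le hx a b)
        · rw [dEx_eq hx hab, dEx_eq hx hbc, dEx_eq hx hac]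
          set m := fd x hx a c hac with hm
          by_cases hxm : x a m = x b m
          · have h2 : x b m ≠ x c m := fun he => fd_mem hx hac (hxm.trans he)
            have hmem : m ∈ Finset.univ.filter (fun i : Fin n => x b i ≠ x c i) :=
              Finset.mem_filter.2 ⟨Finset.mem_univ m, h2⟩
            have hle : (fd x hx b c hbc : ℕ) ≤ (m : ℕ) := Finset.min'_le _ m hmem
            refine (min_le_right _ _).trans ?_
            omega
          · have hmem : m ∈ Finset.univ.filter (fun i : Fin n => x a i ≠ x b i) :=
              Finset.mem_filter.2 ⟨Finset.mem_univ m, hxm⟩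
            have hle : (fd x hx a b hab : ℕ) ≤ (m : ℕ) := Finset.min'_le _ m hmem
            refine (min_le_left _ _).trans ?_
            omega

lemma exactCert_valid (x : Fin k → E n) (hx : Function.Injective x) :
    Valid x (exactCert x hx) := by
  have hsplit : ∀ a b (i : Fin n), (exactCert x hx).d a b = (i : ℕ) + 1 → x a i ≠ x b i := by
    intro a b i hd
    have hab : a ≠ b := ne_of_dsplit _ hd
    rw [show (exactCert x hx).d a b = (fd x hx a b hab : ℕ) + 1 from dEx_eq hx hab] at hd
    have : fd x hx a b hab = i := Fin.ext (by omega)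
    rw [← this]
    exact fd_mem hx hab
  refine ⟨hsplit, ?_⟩
  intro a b c e i j hd hnoise
  have hpos : 0 < |x a i - x b i| := by
    rw [abs_pos, sub_ne_zero]
    exact hsplit a b i hd
  have hzero : x c j = x e j := by
    by_cases hce : c = e
    · subst hce; rfl
    · rw [show (exactCert x hx).d c e = (fd x hx c e hce : ℕ) + 1 from dEx_eq hx hce] at hnoise
      exact fd_min hx hce j (by omega)
  rw [hzero]
  simpa using hpos

/-! ### Permutation equivariance -/

def permCert (C : Cert n k) (σ : Equiv.Perm (Fin k)) : Cert n k where
  d a b := C.d (σ a) (σ b)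
  symm a b := C.symm _ _
  one_le a b := C.one_le _ _
  le_n a b h := C.le_n _ _ (fun he => h (σ.injective he))
  diag a := C.diag _
  ultra a b c := C.ultra _ _ _

lemma valid_perm {x : Fin k → E n} {C : Cert n k} (hv : Valid x C) (σ : Equiv.Perm (Fin k)) :
    Valid (x ∘ σ) (permCert C σ) :=
  ⟨fun a b i hd => hv.1 (σ a) (σ b) i hd,
   fun a b c e i j hd hn => hv.2 (σ a) (σ b) (σ c) (σ e) i j hd hn⟩

lemma weight_perm (C : Cert n k) (σ : Equiv.Perm (Fin k)) :
    weight (permCert C σ) = weight C := by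
  unfold weight
  refine Finset.sum_congr rfl fun j _ => ?_
  have : nclasses (permCert C σ) j = nclasses C j := by
    unfold nclasses
    refine Nat.card_congr (Quotient.congr σ ?_)
    intro a b
    show a = b ∨ j < C.d (σ a) (σ b) ↔ σ a = σ b ∨ j < C.d (σ a) (σ b)
    constructor
    · rintro (rfl | h)
      · exact Or.inl rfl
      · exact Or.inr h
    · rintro (h | h)
      · exact Or.inl (σ.injective h)
      · exact Or.inr h
  rw [this]

lemma cord_perm (x : Fin k → E n) (C : Cert n k) (σ : Equiv.Perm (Fin k)) (a b : Fin k) :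
    COrd (x ∘ σ) (permCert C σ) a b ↔ COrd x C (σ a) (σ b) := Iff.rfl

lemma rkF_perm (x : Fin k → E n) (C : Cert n k) (σ : Equiv.Perm (Fin k)) (a : Fin k) :
    rkF (x ∘ σ) (permCert C σ) a = rkF x C (σ a) := by
  unfold rkF
  have himg : (⇑σ) '' {b | COrd (x ∘ σ) (permCert C σ) b a} = {c | COrd x C c (σ a)} := by
    ext c
    constructor
    · rintro ⟨b, hb, rfl⟩
      exact hb
    · intro hc
      exact ⟨σ.symm c, by simpa [cord_perm] using hc, by simp⟩
  rw [← himg, Set.ncard_image_of_injective _ σ.injective]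


/-! ### The open sets -/

def Vw (n k : ℕ) (w : ℕ) : Set (Conf n k) :=
  {x | ∃ C : Cert n k, Valid x.1 C ∧ weight C = w}

open Classical in
noncomputable def rkC (n k : ℕ) (w : ℕ) (x : Conf n k) : Fin k → ℕ :=
  if h : x ∈ Vw n k w then rkF x.1 h.choose else fun _ => 0

lemma rkC_eq {n k w : ℕ} {x : Conf n k} (hx : x ∈ Vw n k w) {C : Cert n k}
    (hC : Valid x.1 C) (hwC : weight C = w) : rkC n k w x = rkF x.1 C := by
  classical
  rw [rkC]
  rw [dif_pos hx]
  have h1 := hx.choose_spec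
  unfold rkF
  rw [cord_eq_of_weight h1.1 hC (h1.2.trans hwC.symm)]

lemma cont_coord {n k : ℕ} (a : Fin k) (i : Fin n) :
    Continuous (fun y : Conf n k => y.1 a i) := by
  have h1 : Continuous (fun y : Conf n k => y.1 a) :=
    (continuous_apply a).comp continuous_subtype_val
  exact (EuclideanSpace.proj i).continuous.comp h1

def stabSet (n k : ℕ) (x : Conf n k) (C : Cert n k) : Set (Conf n k) :=
  {y | Valid y.1 C ∧ ∀ (a b : Fin k) (i : Fin n),
      C.d a b = (i : ℕ) + 1 → x.1 a i < x.1 b i → y.1 a i < y.1 b i}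

lemma isOpen_stabSet (n k : ℕ) (x : Conf n k) (C : Cert n k) :
    IsOpen (stabSet n k x C) := by
  have h1 : stabSet n k x C =
      (⋂ (a : Fin k), ⋂ (b : Fin k), ⋂ (i : Fin n),
        {y : Conf n k | C.d a b = (i : ℕ) + 1 → y.1 a i ≠ y.1 b i}) ∩
      ((⋂ (a : Fin k), ⋂ (b : Fin k), ⋂ (c : Fin k), ⋂ (e : Fin k), ⋂ (i : Fin n), ⋂ (j : Fin n),
        {y : Conf n k | C.d a b = (i : ℕ) + 1 → (j : ℕ) + 1 < C.d c e →
          |y.1 c j - y.1 e j| < |y.1 a i - y.1 b i|}) ∩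
      (⋂ (a : Fin k), ⋂ (b : Fin k), ⋂ (i : Fin n),
        {y : Conf n k | C.d a b = (i : ℕ) + 1 → x.1 a i < x.1 b i → y.1 a i < y.1 b i})) := by
    ext y
    simp only [stabSet, Set.mem_inter_iff, Set.mem_iInter, Set.mem_setOf_eq, Valid]
    tauto
  rw [h1]
  refine IsOpen.inter ?_ (IsOpen.inter ?_ ?_)
  · refine isOpen_iInter_of_finite fun a => isOpen_iInter_of_finite fun b =>
      isOpen_iInter_of_finite fun i => ?_
    by_cases hd : C.d a b = (i : ℕ) + 1
    · have he : {y : Conf n k | C.d a b = (i : ℕ) + 1 → y.1 a i ≠ y.1 b i} =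
          {y : Conf n k | y.1 a i ≠ y.1 b i} := by ext y; simp [hd]
      rw [he]
      exact isOpen_ne_fun (cont_coord a i) (cont_coord b i)
    · have he : {y : Conf n k | C.d a b = (i : ℕ) + 1 → y.1 a i ≠ y.1 b i} = Set.univ := by
        ext y; simp [hd]
      rw [he]; exact isOpen_univ
  · refine isOpen_iInter_of_finite fun a => isOpen_iInter_of_finite fun b =>
      isOpen_iInter_of_finite fun c => isOpen_iInter_of_finite fun e =>
      isOpen_iInter_of_finite fun i => isOpen_iInter_of_finite fun j => ?_
    by_cases hd : C.d a b = (i : ℕ) + 1 ∧ (j : ℕ) + 1 < C.d c e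
    · have he : {y : Conf n k | C.d a b = (i : ℕ) + 1 → (j : ℕ) + 1 < C.d c e →
          |y.1 c j - y.1 e j| < |y.1 a i - y.1 b i|} =
          {y : Conf n k | |y.1 c j - y.1 e j| < |y.1 a i - y.1 b i|} := by
        ext y; simp [hd.1, hd.2]
      rw [he]
      exact isOpen_lt (continuous_abs.comp ((cont_coord c j).sub (cont_coord e j)))
        (continuous_abs.comp ((cont_coord a i).sub (cont_coord b i)))
    · have he : {y : Conf n k | C.d a b = (i : ℕ) + 1 → (j : ℕ) + 1 < C.d c e →
          |y.1 c j - y.1 e j| < |y.1 a i - y.1 b i|} = Set.univ := by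
        ext y
        simp only [Set.mem_setOf_eq, Set.mem_univ, iff_true]
        intro h1 h2
        exact absurd ⟨h1, h2⟩ hd
      rw [he]; exact isOpen_univ
  · refine isOpen_iInter_of_finite fun a => isOpen_iInter_of_finite fun b =>
      isOpen_iInter_of_finite fun i => ?_
    by_cases hd : C.d a b = (i : ℕ) + 1 ∧ x.1 a i < x.1 b i
    · have he : {y : Conf n k | C.d a b = (i : ℕ) + 1 → x.1 a i < x.1 b i →
          y.1 a i < y.1 b i} = {y : Conf n k | y.1 a i < y.1 b i} := by
        ext y; simp [hd.1, hd.2]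
      rw [he]
      exact isOpen_lt (cont_coord a i) (cont_coord b i)
    · have he : {y : Conf n k | C.d a b = (i : ℕ) + 1 → x.1 a i < x.1 b i →
          y.1 a i < y.1 b i} = Set.univ := by
        ext y
        simp only [Set.mem_setOf_eq, Set.mem_univ, iff_true]
        intro h1 h2
        exact absurd ⟨h1, h2⟩ hd
      rw [he]; exact isOpen_univ

lemma cord_eq_of_stab {n k : ℕ} {x y : Conf n k} {C : Cert n k} (hxv : Valid x.1 C)
    (hy : y ∈ stabSet n k x C) : COrd y.1 C = COrd x.1 C := by
  funext a b
  refine propext ⟨?_, ?_⟩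
  · rintro ⟨i, hd, hlt⟩
    have hab : a ≠ b := ne_of_dsplit C hd
    rcases cord_total hxv hab with h | h
    · exact h
    · obtain ⟨i2, hd2, hlt2⟩ := h
      have : (i2 : ℕ) = (i : ℕ) := by rw [C.symm b a] at hd2; omega
      have hi : i2 = i := Fin.ext this
      subst hi
      have := hy.2 b a i2 hd2 hlt2
      exact absurd hlt (not_lt.2 this.le)
  · rintro ⟨i, hd, hlt⟩
    exact ⟨i, hd, hy.2 a b i hd hlt⟩

lemma stable {n k w : ℕ} {x : Conf n k} (hx : x ∈ Vw n k w) :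
    ∃ O : Set (Conf n k), IsOpen O ∧ x ∈ O ∧ O ⊆ Vw n k w ∧
      ∀ y ∈ O, rkC n k w y = rkC n k w x := by
  obtain ⟨C, hC, hwC⟩ := hx
  refine ⟨stabSet n k x C, isOpen_stabSet n k x C, ⟨hC, fun a b i _ h => h⟩, ?_, ?_⟩
  · intro y hy
    exact ⟨C, hy.1, hwC⟩
  · intro y hy
    have hyV : y ∈ Vw n k w := ⟨C, hy.1, hwC⟩
    rw [rkC_eq hyV hy.1 hwC, rkC_eq ⟨C, hC, hwC⟩ hC hwC]
    unfold rkF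
    rw [cord_eq_of_stab hC hy]

lemma isOpen_Vw (n k w : ℕ) : IsOpen (Vw n k w) := by
  rw [isOpen_iff_forall_mem_open]
  intro x hx
  obtain ⟨O, hO, hxO, hOV, -⟩ := stable hx
  exact ⟨O, hOV, hO, hxO⟩


/-! ### Quotient topology and homotopies -/

variable {n k : ℕ}

abbrev cmk : Conf n k → UConf n k := Quotient.mk (confSetoid n k)

lemma continuous_cmk : Continuous (cmk : Conf n k → UConf n k) := continuous_quotient_mk'

def pact (σ : Equiv.Perm (Fin k)) (x : Conf n k) : Conf n k :=
  ⟨x.1 ∘ σ, x.2.comp σ.injective⟩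

lemma continuous_pact (σ : Equiv.Perm (Fin k)) : Continuous (pact (n := n) σ) := by
  apply Continuous.subtype_mk
  exact continuous_pi fun a => (continuous_apply (σ a)).comp continuous_subtype_val

lemma pact_pact (σ : Equiv.Perm (Fin k)) (x : Conf n k) :
    pact σ.symm (pact σ x) = x := by
  apply Subtype.ext
  funext a
  simp [pact]

lemma isOpenMap_cmk : IsOpenMap (cmk : Conf n k → UConf n k) := by
  intro W hW
  have hpre : cmk ⁻¹' (cmk '' W) = ⋃ σ : Equiv.Perm (Fin k), (pact σ) ⁻¹' W := by
    ext z
    simp only [Set.mem_preimage, Set.mem_image, Set.mem_iUnion]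
    constructor
    · rintro ⟨x, hxW, hxz⟩
      refine ⟨?_, ?_⟩
      · exact (Quotient.exact hxz).choose.symm
      · have hσ := (Quotient.exact hxz).choose_spec
        set σ := (Quotient.exact hxz).choose
        have hx : pact σ.symm z = x := by
          apply Subtype.ext
          funext a
          have h2 := congrFun hσ (σ.symm a)
          simpa [pact] using h2.symm
        rw [hx]
        exact hxW
    · rintro ⟨σ, hz⟩
      refine ⟨pact σ z, hz, ?_⟩
      apply Quotient.sound
      refine ⟨σ.symm, ?_⟩
      funext a
      simp [pact]
  have hopen : IsOpen (cmk ⁻¹' (cmk '' W)) := by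
    rw [hpre]
    exact isOpen_iUnion fun σ => hW.preimage (continuous_pact σ)
  exact (isQuotientMap_quotient_mk' (s := confSetoid n k)).isOpen_preimage.1 hopen

lemma pact_mem_Vw {w : ℕ} {x : Conf n k} (hx : x ∈ Vw n k w) (σ : Equiv.Perm (Fin k)) :
    pact σ x ∈ Vw n k w := by
  obtain ⟨C, hC, hwC⟩ := hx
  exact ⟨permCert C σ, valid_perm hC σ, (weight_perm C σ).trans hwC⟩

lemma rkC_pact {w : ℕ} {x : Conf n k} (hx : x ∈ Vw n k w) (σ : Equiv.Perm (Fin k)) (a : Fin k) :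
    rkC n k w (pact σ x) a = rkC n k w x (σ a) := by
  obtain ⟨C, hC, hwC⟩ := hx
  have h1 : rkC n k w (pact σ x) = rkF (x.1 ∘ σ) (permCert C σ) :=
    rkC_eq (pact_mem_Vw ⟨C, hC, hwC⟩ σ) (valid_perm hC σ) ((weight_perm C σ).trans hwC)
  have h2 : rkC n k w x = rkF x.1 C := rkC_eq ⟨C, hC, hwC⟩ hC hwC
  rw [h1, h2, rkF_perm]

/-- The constant point on the diagonal. -/
def diagPt (n : ℕ) (c : ℝ) : E n := (WithLp.equiv 2 (Fin n → ℝ)).symm (fun _ => c)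

lemma diagPt_apply (n : ℕ) (c : ℝ) (i : Fin n) : diagPt n c i = c := rfl

/-- The straight-line homotopy to the rank configuration on the diagonal. -/
noncomputable def hval (w : ℕ) (p : unitInterval × ↥(Vw n k w)) : Fin k → E n :=
  fun a => (1 - (p.1 : ℝ)) • (p.2.1.1 a) +
    (p.1 : ℝ) • diagPt n ((rkC n k w p.2.1 a : ℕ) : ℝ)

lemma hval_apply (w : ℕ) (p : unitInterval × ↥(Vw n k w)) (a : Fin k) (i : Fin n) :
    hval w p a i = (1 - (p.1 : ℝ)) * (p.2.1.1 a i) +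
      (p.1 : ℝ) * ((rkC n k w p.2.1 a : ℕ) : ℝ) := by
  simp [hval, PiLp.add_apply, PiLp.smul_apply, diagPt_apply, smul_eq_mul]

lemma hval_inj (w : ℕ) (p : unitInterval × ↥(Vw n k w)) : Function.Injective (hval w p) := by
  obtain ⟨C, hC, hwC⟩ := p.2.2
  have hrk : rkC n k w p.2.1 = rkF p.2.1.1 C := rkC_eq p.2.2 hC hwC
  have key : ∀ a b : Fin k, COrd p.2.1.1 C a b → hval w p a ≠ hval w p b := by
    rintro a b ⟨i, hd, hlt⟩ heq
    have hltr : (rkC n k w p.2.1 a : ℝ) < (rkC n k w p.2.1 b : ℝ) := by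
      rw [hrk]
      exact_mod_cast rkF_lt hC ⟨i, hd, hlt⟩
    have h0 : (0 : ℝ) ≤ (p.1 : ℝ) := p.1.2.1
    have h1 : (p.1 : ℝ) ≤ 1 := p.1.2.2
    have hco : hval w p a i = hval w p b i := by rw [heq]
    rw [hval_apply, hval_apply] at hco
    rcases eq_or_lt_of_le h0 with h | h
    · rw [← h] at hco
      simp at hco
      linarith
    · nlinarith
  intro a b heq
  by_contra hab
  rcases cord_total hC hab with h | h
  · exact key a b h heq
  · exact key b a h heq.symm

noncomputable def hconf (w : ℕ) (p : unitInterval × ↥(Vw n k w)) : Conf n k :=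
  ⟨hval w p, hval_inj w p⟩

lemma continuous_hval (w : ℕ) : Continuous (hval (n := n) (k := k) w) := by
  rw [continuous_iff_continuousAt]
  rintro ⟨t₀, x₀⟩
  obtain ⟨O, hO, hxO, hOV, hrk⟩ := stable x₀.2
  have hcg : Continuous (fun p : unitInterval × ↥(Vw n k w) => (fun a =>
      (1 - (p.1 : ℝ)) • (p.2.1.1 a) +
        (p.1 : ℝ) • diagPt n ((rkC n k w x₀.1 a : ℕ) : ℝ) : Fin k → E n)) := by
    apply continuous_pi
    intro a
    have hct : Continuous (fun p : unitInterval × ↥(Vw n k w) => (p.1 : ℝ)) :=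
      continuous_subtype_val.comp continuous_fst
    have hcx : Continuous (fun p : unitInterval × ↥(Vw n k w) => p.2.1.1 a) :=
      (continuous_apply a).comp (continuous_subtype_val.comp
        (continuous_subtype_val.comp continuous_snd))
    exact (((continuous_const.sub hct).smul hcx)).add (hct.smul continuous_const)
  apply hcg.continuousAt.congr
  have hmem : (Set.univ ×ˢ (Subtype.val ⁻¹' O) : Set (unitInterval × ↥(Vw n k w))) ∈
      nhds (t₀, x₀) := by
    apply prod_mem_nhds Filter.univ_mem
    exact (hO.preimage continuous_subtype_val).mem_nhds hxO
  refine Filter.eventuallyEq_of_mem hmem ?_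
  rintro ⟨t, y⟩ hy
  have : rkC n k w y.1 = rkC n k w x₀.1 := hrk y.1 hy.2
  funext a
  simp only [hval, this]

lemma continuous_hconf (w : ℕ) : Continuous (hconf (n := n) (k := k) w) :=
  Continuous.subtype_mk (continuous_hval w) _

noncomputable def phi0 (w : ℕ) (p : unitInterval × ↥(Vw n k w)) : UConf n k :=
  cmk (hconf w p)

lemma continuous_phi0 (w : ℕ) : Continuous (phi0 (n := n) (k := k) w) :=
  continuous_cmk.comp (continuous_hconf w)

lemma phi0_inv (w : ℕ) (t : unitInterval) (x y : ↥(Vw n k w))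
    (hxy : cmk x.1 = cmk y.1) : phi0 w (t, x) = phi0 w (t, y) := by
  obtain ⟨σ, hσ⟩ := Quotient.exact hxy
  have hy : y.1 = pact σ x.1 := by
    apply Subtype.ext
    exact hσ.symm
  apply Quotient.sound
  refine ⟨σ, ?_⟩
  funext a
  show hval w (t, x) (σ a) = hval w (t, y) a
  refine PiLp.ext fun i => ?_
  rw [hval_apply, hval_apply]
  have h1 : y.1.1 a i = x.1.1 (σ a) i := by rw [hy]; rfl
  have h2 : rkC n k w y.1 a = rkC n k w x.1 (σ a) := by rw [hy, rkC_pact x.2 σ a]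
  rw [h1, h2]

def Uw (n k w : ℕ) : Set (UConf n k) := cmk '' (Vw n k w)

lemma isOpen_Uw (n k w : ℕ) : IsOpen (Uw n k w) := isOpenMap_cmk _ (isOpen_Vw n k w)

noncomputable def qmap (w : ℕ) (x : ↥(Vw n k w)) : ↥(Uw n k w) :=
  ⟨cmk x.1, Set.mem_image_of_mem _ x.2⟩

lemma continuous_qmap (w : ℕ) : Continuous (qmap (n := n) (k := k) w) :=
  Continuous.subtype_mk (continuous_cmk.comp continuous_subtype_val) _

lemma surjective_qmap (w : ℕ) : Function.Surjective (qmap (n := n) (k := k) w) := by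
  rintro ⟨u, x, hx, rfl⟩
  exact ⟨⟨x, hx⟩, rfl⟩

lemma isOpenMap_qmap (w : ℕ) : IsOpenMap (qmap (n := n) (k := k) w) := by
  intro A hA
  obtain ⟨A', hA', rfl⟩ := isOpen_induced_iff.1 hA
  have himg : qmap w '' (Subtype.val ⁻¹' A') =
      Subtype.val ⁻¹' (cmk '' (A' ∩ Vw n k w)) := by
    ext u
    constructor
    · rintro ⟨x, hxA, rfl⟩
      exact ⟨x.1, ⟨hxA, x.2⟩, rfl⟩
    · rintro ⟨x', ⟨hx'A, hx'V⟩, heq⟩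
      exact ⟨⟨x', hx'V⟩, hx'A, Subtype.ext heq⟩
  rw [himg]
  exact (isOpenMap_cmk _ (hA'.inter (isOpen_Vw n k w))).preimage continuous_subtype_val

lemma isQuotientMap_pimap (w : ℕ) :
    IsQuotientMap (Prod.map (id : unitInterval → unitInterval) (qmap (n := n) (k := k) w)) :=
  IsOpenMap.isQuotientMap (IsOpenMap.id.prodMap (isOpenMap_qmap w))
    (continuous_id.prodMap (continuous_qmap w))
    (Function.Surjective.prodMap Function.surjective_id (surjective_qmap w))

noncomputable def secmap (w : ℕ) : ↥(Uw n k w) → ↥(Vw n k w) :=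
  Function.surjInv (surjective_qmap w)

lemma qmap_secmap (w : ℕ) (u : ↥(Uw n k w)) : qmap w (secmap w u) = u :=
  Function.surjInv_eq (surjective_qmap w) u

noncomputable def FH (w : ℕ) (p : unitInterval × ↥(Uw n k w)) : UConf n k :=
  phi0 w (p.1, secmap w p.2)

lemma FH_comp (w : ℕ) (p : unitInterval × ↥(Vw n k w)) :
    FH w (Prod.map id (qmap w) p) = phi0 w p := by
  have h1 : cmk (secmap w (qmap w p.2)).1 = cmk p.2.1 :=
    congrArg Subtype.val (qmap_secmap w (qmap w p.2))
  exact phi0_inv w p.1 _ _ h1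

lemma continuous_FH (w : ℕ) : Continuous (FH (n := n) (k := k) w) := by
  rw [(isQuotientMap_pimap w).continuous_iff]
  have heq : FH (n := n) (k := k) w ∘ Prod.map id (qmap w) = phi0 w :=
    funext fun p => FH_comp w p
  rw [heq]
  exact continuous_phi0 w

lemma hval_zero (w : ℕ) (y : ↥(Vw n k w)) : hval w (0, y) = y.1.1 := by
  funext a
  refine PiLp.ext fun i => ?_
  rw [hval_apply]
  norm_num

lemma FH_zero (w : ℕ) (u : ↥(Uw n k w)) : FH w (0, u) = u.1 := by
  have h1 : cmk (secmap w u).1 = u.1 := congrArg Subtype.val (qmap_secmap w u)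
  show cmk (hconf w (0, secmap w u)) = u.1
  rw [← h1]
  apply congrArg
  apply Subtype.ext
  exact hval_zero w (secmap w u)

/-- The standard configuration on the diagonal line. -/
def stdCfg (n k : ℕ) (hn : 1 ≤ n) : Conf n k :=
  ⟨fun a => WithLp.toLp 2 (fun _ => ((a : ℕ) : ℝ)), by
    intro a b hab
    have := congrArg (fun v : E n => v ⟨0, hn⟩) hab
    have : ((a : ℕ) : ℝ) = ((b : ℕ) : ℝ) := this
    exact Fin.ext (Nat.cast_injective this)⟩

lemma FH_one (w : ℕ) (hn : 1 ≤ n) (u : ↥(Uw n k w)) :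
    FH w (1, u) = cmk (stdCfg n k hn) := by
  set y := secmap w u with hy
  obtain ⟨C, hC, hwC⟩ := y.2
  have hrk : rkC n k w y.1 = rkF y.1.1 C := rkC_eq y.2 hC hwC
  have hlt : ∀ a, rkC n k w y.1 a < k := by
    intro a
    rw [hrk]
    exact rkF_lt_k a
  have hinj : Function.Injective (fun a : Fin k => (⟨rkC n k w y.1 a, hlt a⟩ : Fin k)) := by
    intro a b hab
    apply rkF_injective hC
    have h1 := congrArg Fin.val hab
    simpa [hrk] using h1
  have hbij := Finite.injective_iff_bijective.1 hinj
  set ρ : Equiv.Perm (Fin k) := Equiv.ofBijective _ hbij with hρ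
  show cmk (hconf w (1, y)) = cmk (stdCfg n k hn)
  apply Quotient.sound
  refine ⟨ρ.symm, ?_⟩
  funext b
  show hval w (1, y) (ρ.symm b) = (stdCfg n k hn).1 b
  have h2 : rkC n k w y.1 (ρ.symm b) = (b : ℕ) := by
    have h3 := ρ.apply_symm_apply b
    have h4 := congrArg Fin.val h3
    simpa [hρ, Equiv.ofBijective] using h4
  refine PiLp.ext fun i => ?_
  rw [hval_apply]
  show _ = ((b : ℕ) : ℝ)
  rw [h2]
  norm_num

lemma nullhomotopic_Uw (w : ℕ) (hn : 1 ≤ n) :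
    NullhomotopicOn (ContinuousMap.id (UConf n k)) (Uw n k w) := by
  refine ⟨cmk (stdCfg n k hn), ⟨?_⟩⟩
  refine
    { toFun := FH w
      continuous_toFun := continuous_FH w
      map_zero_left := ?_
      map_one_left := ?_ }
  · intro u
    show FH w (0, u) = _
    rw [FH_zero w u]
    rfl
  · intro u
    show FH w (1, u) = _
    rw [FH_one w hn u]
    rfl

end LSCHelp

/-- For all `n` and `k`, `cat (B(ℝ^n, k)) ≤ (k−1)·(n−1)`. -/
theorem lscat_uconf_le (n k : ℕ) (hn : 1 ≤ n) (hk : 1 ≤ k) :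
    LSCat (UConf n k) ≤ (((k - 1) * (n - 1) : ℕ) : ℕ∞) := by
  have hcat : catLE (ContinuousMap.id (UConf n k)) ((k - 1) * (n - 1)) := by
    refine ⟨fun w => LSCHelp.Uw n k (w : ℕ), fun w => LSCHelp.isOpen_Uw n k (w : ℕ), ?_,
      fun w => LSCHelp.nullhomotopic_Uw (w : ℕ) hn⟩
    rw [Set.iUnion_eq_univ_iff]
    intro q
    obtain ⟨x, rfl⟩ := Quotient.exists_rep q
    have hC := LSCHelp.exactCert_valid x.1 x.2
    have hwle : LSCHelp.weight (LSCHelp.exactCert x.1 x.2) ≤ (k - 1) * (n - 1) :=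
      LSCHelp.weight_le hk _
    refine ⟨⟨LSCHelp.weight (LSCHelp.exactCert x.1 x.2), by omega⟩, ?_⟩
    exact ⟨x, ⟨LSCHelp.exactCert x.1 x.2, hC, rfl⟩, rfl⟩
  unfold LSCat mapCat
  exact sInf_le ⟨(k - 1) * (n - 1), rfl, hcat⟩
end
end
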